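/- arXiv:1812.03820 — 5 statements merged into one kernel-verified Lean document; each statement's English description precedes it below -/
import Mathlib

section
/- For every nonnegative integer m, N(2,3,3;2m) = N(1,3,3;m), i.e. the number of integer solutions of 2x²+3y²+3z² = 2m equals the number of integer solutions of x²+3y²+3z² = m. -/
def tri (x : ℤ) : ℤ := x * (x + 1) / 2

noncomputable def N (a b c n : ℕ) : ℕ :=
  Nat.card {p : ℤ × ℤ × ℤ // (n : ℤ) = a * p.1 ^ 2 + b * p.2.1 ^ 2 + c * p.2.2 ^ 2}

noncomputable def t (a b c n : ℕ) : ℕ :=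
  Nat.card {p : ℤ × ℤ × ℤ // (n : ℤ) = a * tri p.1 + b * tri p.2.1 + c * tri p.2.2}

noncomputable def T (a b c n : ℕ) : ℕ :=
  Nat.card {p : ℕ × ℕ × ℕ // (n : ℤ) = a * tri p.1 + b * tri p.2.1 + c * tri p.2.2}

lemma even_sum_of_sol (m x y z : ℤ) (h : 2 * m = 2 * x ^ 2 + 3 * y ^ 2 + 3 * z ^ 2) :
    (2:ℤ) ∣ (y + z) := by
  have h1 : (2:ℤ) ∣ (y ^ 2 + z ^ 2) :=
    ⟨m - x ^ 2 - y ^ 2 - z ^ 2, by linear_combination -h⟩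
  have h2 : (2:ℤ) ∣ (y + z) ^ 2 := by
    obtain ⟨k, hk⟩ := h1
    exact ⟨k + y * z, by linear_combination hk⟩
  have h3 : Even ((y + z) ^ 2) := by
    obtain ⟨k, hk⟩ := h2
    exact ⟨k, by omega⟩
  obtain ⟨k, hk⟩ := (Int.even_pow.mp h3).1
  exact ⟨k, by omega⟩

theorem stmt1 (m : ℕ) : N 2 3 3 (2 * m) = N 1 3 3 m := by
  apply Nat.card_congr
  refine ⟨fun p => ⟨(p.1.1, ((p.1.2.1 + p.1.2.2) / 2, (p.1.2.1 - p.1.2.2) / 2)), ?_⟩,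
         fun q => ⟨(q.1.1, (q.1.2.1 + q.1.2.2, q.1.2.1 - q.1.2.2)), ?_⟩, ?_, ?_⟩
  · obtain ⟨⟨x, y, z⟩, h⟩ := p
    push_cast at h ⊢
    have hd := even_sum_of_sol m x y z h
    obtain ⟨u, hu⟩ := hd
    have hv : y - z = 2 * (u - z) := by omega
    have e1 : (y + z) / 2 = u := by omega
    have e2 : (y - z) / 2 = u - z := by omega
    rw [e1, e2]
    have key : (2:ℤ) * m = 2 * (1 * x ^ 2 + 3 * u ^ 2 + 3 * (u - z) ^ 2) := by
      have hy : y = 2 * u - z := by omega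
      subst hy
      linear_combination h
    exact mul_left_cancel₀ two_ne_zero key
  · obtain ⟨⟨x, u, v⟩, h⟩ := q
    push_cast at h ⊢
    linear_combination 2 * h
  · rintro ⟨⟨x, y, z⟩, h⟩
    push_cast at h
    have hd := even_sum_of_sol m x y z h
    apply Subtype.ext
    simp only [Prod.mk.injEq]
    refine ⟨trivial, ?_, ?_⟩ <;> omega
  · rintro ⟨⟨x, u, v⟩, h⟩
    apply Subtype.ext
    simp only [Prod.mk.injEq]
    refine ⟨trivial, ?_, ?_⟩ <;> omega
end

section
/- For every nonnegative integer m, t(2,3,3;8m+6) = 2·t(1,3,3;m). -/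
/- ## Auxiliary lemmas -/

lemma two_tri (x : ℤ) : 2 * tri x = x ^ 2 + x := by
  obtain ⟨k, hk⟩ := Int.even_mul_succ_self x
  have h3 : tri x = k := by unfold tri; rw [hk]; omega
  rw [h3]; linear_combination - hk

lemma memL' (mm x y z a b c : ℤ) (hx : 2 * x = a) (hy : 2 * y = b) (hz : 2 * z = c)
    (h : 2*a^2 + 4*a + 3*b^2 + 6*b + 3*c^2 + 6*c = 64*mm + 48) :
    (8*mm + 6 : ℤ) = 2 * tri x + 3 * tri y + 3 * tri z := by
  have tx := two_tri x; have ty := two_tri y; have tz := two_tri z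
  have hx2 : 4 * x ^ 2 = a ^ 2 := by rw [← hx]; ring
  have hy2 : 4 * y ^ 2 = b ^ 2 := by rw [← hy]; ring
  have hz2 : 4 * z ^ 2 = c ^ 2 := by rw [← hz]; ring
  linarith

lemma memR' (mm u v w a b c : ℤ) (hu : 16 * u = a) (hv : 8 * v = b) (hw : 16 * w = c)
    (h : a^2 + 16*a + 12*b^2 + 96*b + 3*c^2 + 48*c = 512*mm) :
    (mm : ℤ) = tri u + 3 * tri v + 3 * tri w := by
  have tu := two_tri u; have tv := two_tri v; have tw := two_tri w
  have hu2 : 256 * u ^ 2 = a ^ 2 := by rw [← hu]; ring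
  have hv2 : 64 * v ^ 2 = b ^ 2 := by rw [← hv]; ring
  have hw2 : 256 * w ^ 2 = c ^ 2 := by rw [← hw]; ring
  linarith

set_option maxHeartbeats 2000000 in
lemma zkey0 : ∀ X Y Z : ZMod 16, 2*(X^2+X)+3*(Y^2+Y)+3*(Z^2+Z) = 12 →
    8*(X+Y) = 0 → 8*(Y+Z) = 8 →
    2*X+9*Y+3*Z+15 = 0 ∧ 2*(2*X-Y+Z+5) = 0 ∧ 2*X+Y-5*Z+7 = 0 ∧ 2*X+5*Y-Z+11 = 0 := by
  decide

set_option maxHeartbeats 2000000 in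
lemma zkey1 : ∀ X Y Z : ZMod 16, 2*(X^2+X)+3*(Y^2+Y)+3*(Z^2+Z) = 12 →
    8*(X+Y) = 0 → 8*(Y+Z) = 0 →
    2*X+9*Y-3*Z+12 = 0 ∧ 2*(2*X-Y-Z+4) = 0 ∧ 2*X+Y+5*Z+12 = 0 ∧ 2*X+5*Y+Z+12 = 0 := by
  decide

set_option maxHeartbeats 2000000 in
lemma zkey2 : ∀ X Y Z : ZMod 16, 2*(X^2+X)+3*(Y^2+Y)+3*(Z^2+Z) = 12 →
    8*(X+Y) = 8 → 8*(Y+Z) = 8 →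
    2*X+3*Y+9*Z+15 = 0 ∧ 2*(2*X+Y-Z+5) = 0 ∧ 2*X-5*Y+Z-9 = 0 ∧ 4*(Y+Z+1) = 0 := by
  decide

set_option maxHeartbeats 2000000 in
lemma zkey3 : ∀ X Y Z : ZMod 16, 2*(X^2+X)+3*(Y^2+Y)+3*(Z^2+Z) = 12 →
    8*(X+Y) = 8 → 8*(Y+Z) = 0 →
    2*X+3*Y-9*Z+6 = 0 ∧ 2*(2*X+Y+Z+6) = 0 ∧ 2*X-5*Y-Z-10 = 0 ∧ 4*(Y-Z) = 0 := by
  decide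

section transfer

variable (x y z mm : ℤ)

lemma hmain_of (hq : 2*(x^2+x)+3*(y^2+y)+3*(z^2+z) = 16*mm+12) :
    2*((x:ZMod 16)^2+(x:ZMod 16))+3*((y:ZMod 16)^2+(y:ZMod 16))+3*((z:ZMod 16)^2+(z:ZMod 16)) = 12 := by
  have hc : ((2*(x^2+x)+3*(y^2+y)+3*(z^2+z) : ℤ) : ZMod 16) = ((16*mm+12 : ℤ) : ZMod 16) := by
    rw [hq]
  push_cast at hc
  rw [show ((16 : ZMod 16)) = 0 by decide] at hc
  linear_combination hc

lemma par_zero (a b : ℤ) (h : (a + b) % 2 = 0) : (8 : ZMod 16)*((a : ZMod 16)+(b : ZMod 16)) = 0 := by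
  have hd : ((16:ℕ) : ℤ) ∣ 8*(a+b) := by push_cast; omega
  have h0 : ((8*(a+b) : ℤ) : ZMod 16) = 0 := (ZMod.intCast_zmod_eq_zero_iff_dvd _ 16).mpr hd
  push_cast at h0
  linear_combination h0

lemma par_one (a b : ℤ) (h : (a + b) % 2 = 1) : (8 : ZMod 16)*((a : ZMod 16)+(b : ZMod 16)) = 8 := by
  have hd : ((16:ℕ) : ℤ) ∣ 8*(a+b) - 8 := by push_cast; omega
  have h0 : ((8*(a+b) - 8 : ℤ) : ZMod 16) = 0 := (ZMod.intCast_zmod_eq_zero_iff_dvd _ 16).mpr hd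
  push_cast at h0
  linear_combination h0

lemma dvd16_of (n : ℤ) (h : ((n : ℤ) : ZMod 16) = 0) : (16:ℤ) ∣ n := by
  have := (ZMod.intCast_zmod_eq_zero_iff_dvd n 16).mp h
  exact_mod_cast this

lemma keyd0 (hq : 2*(x^2+x)+3*(y^2+y)+3*(z^2+z) = 16*mm+12)
    (hxy : (x+y) % 2 = 0) (hyz : (y+z) % 2 = 1) :
    (16:ℤ) ∣ 2*x+9*y+3*z+15 ∧ (8:ℤ) ∣ 2*x-y+z+5 ∧ (16:ℤ) ∣ 2*x+y-5*z+7 ∧ (16:ℤ) ∣ 2*x+5*y-z+11 := by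
  obtain ⟨c1, c2, c3, c4⟩ := zkey0 x y z (hmain_of x y z mm hq) (par_zero x y hxy) (par_one y z hyz)
  refine ⟨dvd16_of _ (by push_cast; linear_combination c1), ?_,
    dvd16_of _ (by push_cast; linear_combination c3), dvd16_of _ (by push_cast; linear_combination c4)⟩
  have := dvd16_of (2*(2*x-y+z+5)) (by push_cast; linear_combination c2)
  omega

lemma keyd1 (hq : 2*(x^2+x)+3*(y^2+y)+3*(z^2+z) = 16*mm+12)
    (hxy : (x+y) % 2 = 0) (hyz : (y+z) % 2 = 0) :
    (16:ℤ) ∣ 2*x+9*y-3*z+12 ∧ (8:ℤ) ∣ 2*x-y-z+4 ∧ (16:ℤ) ∣ 2*x+y+5*z+12 ∧ (16:ℤ) ∣ 2*x+5*y+z+12 := by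
  obtain ⟨c1, c2, c3, c4⟩ := zkey1 x y z (hmain_of x y z mm hq) (par_zero x y hxy) (par_zero y z hyz)
  refine ⟨dvd16_of _ (by push_cast; linear_combination c1), ?_,
    dvd16_of _ (by push_cast; linear_combination c3), dvd16_of _ (by push_cast; linear_combination c4)⟩
  have := dvd16_of (2*(2*x-y-z+4)) (by push_cast; linear_combination c2)
  omega

lemma keyd2 (hq : 2*(x^2+x)+3*(y^2+y)+3*(z^2+z) = 16*mm+12)
    (hxy : (x+y) % 2 = 1) (hyz : (y+z) % 2 = 1) :
    (16:ℤ) ∣ 2*x+3*y+9*z+15 ∧ (8:ℤ) ∣ 2*x+y-z+5 ∧ (16:ℤ) ∣ 2*x-5*y+z-9 ∧ (4:ℤ) ∣ y+z+1 := by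
  obtain ⟨c1, c2, c3, c4⟩ := zkey2 x y z (hmain_of x y z mm hq) (par_one x y hxy) (par_one y z hyz)
  refine ⟨dvd16_of _ (by push_cast; linear_combination c1), ?_,
    dvd16_of _ (by push_cast; linear_combination c3), ?_⟩
  · have := dvd16_of (2*(2*x+y-z+5)) (by push_cast; linear_combination c2)
    omega
  · have := dvd16_of (4*(y+z+1)) (by push_cast; linear_combination c4)
    omega

lemma keyd3 (hq : 2*(x^2+x)+3*(y^2+y)+3*(z^2+z) = 16*mm+12)
    (hxy : (x+y) % 2 = 1) (hyz : (y+z) % 2 = 0) :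
    (16:ℤ) ∣ 2*x+3*y-9*z+6 ∧ (8:ℤ) ∣ 2*x+y+z+6 ∧ (16:ℤ) ∣ 2*x-5*y-z-10 ∧ (4:ℤ) ∣ y-z := by
  obtain ⟨c1, c2, c3, c4⟩ := zkey3 x y z (hmain_of x y z mm hq) (par_one x y hxy) (par_zero y z hyz)
  refine ⟨dvd16_of _ (by push_cast; linear_combination c1), ?_,
    dvd16_of _ (by push_cast; linear_combination c3), ?_⟩
  · have := dvd16_of (2*(2*x+y+z+6)) (by push_cast; linear_combination c2)
    omega
  · have := dvd16_of (4*(y-z)) (by push_cast; linear_combination c4)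
    omega

end transfer


lemma pext {α β : Type*} {p q : α × β} (h1 : p.1 = q.1) (h2 : p.2 = q.2) : p = q := by
  obtain ⟨a, b⟩ := p; obtain ⟨c, d⟩ := q
  cases h1; cases h2; rfl

/- ## The maps -/

def gx (u v w : ℤ) : ℤ := if (u+w) % 2 = 0 then (-u-6*v-3*w-6)/2 else (-u-6*v+3*w-3)/2
def gy (u v w : ℤ) : ℤ := if (u+w) % 2 = 0 then (-3*u+2*v-w-2)/2 else (-u-2*v-5*w-5)/2
def gzt (u v w : ℤ) : ℤ := if (u+w) % 2 = 0 then (-u-2*v+5*w)/2 else (-3*u+2*v+w-1)/2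
def gzf (u v w : ℤ) : ℤ := if (u+w) % 2 = 0 then (u+2*v-5*w-2)/2 else (3*u-2*v-w-1)/2

def gz (b : Bool) (u v w : ℤ) : ℤ := if b then gzt u v w else gzf u v w

def fb (y z : ℤ) : Bool := if (y+z) % 2 = 0 then false else true

def fu (x y z : ℤ) : ℤ :=
  if (x+y) % 2 = 0 then
    (if (y+z) % 2 = 0 then (-2*x-9*y+3*z-12)/16 else (-2*x-9*y-3*z-15)/16)
  else
    (if (y+z) % 2 = 0 then (-2*x-3*y+9*z-6)/16 else (-2*x-3*y-9*z-15)/16)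

def fv (x y z : ℤ) : ℤ :=
  if (x+y) % 2 = 0 then
    (if (y+z) % 2 = 0 then (-2*x+y+z-4)/8 else (-2*x+y-z-5)/8)
  else
    (if (y+z) % 2 = 0 then (-2*x-y-z-6)/8 else (-2*x-y+z-5)/8)

def fw (x y z : ℤ) : ℤ :=
  if (x+y) % 2 = 0 then
    (if (y+z) % 2 = 0 then (-2*x-y-5*z-12)/16 else (-2*x-y+5*z-7)/16)
  else
    (if (y+z) % 2 = 0 then (2*x-5*y-z-10)/16 else (2*x-5*y+z-9)/16)

/- ## Membership lemmas -/

lemma g_mem (m : ℕ) (b : Bool) (u v w : ℤ)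
    (hp : ((m : ℕ) : ℤ) = ((1:ℕ):ℤ) * tri u + ((3:ℕ):ℤ) * tri v + ((3:ℕ):ℤ) * tri w) :
    ((8*m+6 : ℕ) : ℤ) = ((2:ℕ):ℤ) * tri (gx u v w) + ((3:ℕ):ℤ) * tri (gy u v w)
      + ((3:ℕ):ℤ) * tri (gz b u v w) := by
  have hq : (u^2+u)+3*(v^2+v)+3*(w^2+w) = 2*(m:ℤ) := by
    have tu := two_tri u; have tv := two_tri v; have tw := two_tri w
    push_cast at hp; linarith
  push_cast
  cases b <;> simp only [gz, Bool.false_eq_true, reduceIte, gx, gy, gzt, gzf] <;> split_ifs with h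
  · exact memL' (m:ℤ) _ _ _ (-u-6*v-3*w-6) (-3*u+2*v-w-2) (u+2*v-5*w-2)
      (by omega) (by omega) (by omega) (by linear_combination 32*hq)
  · exact memL' (m:ℤ) _ _ _ (-u-6*v+3*w-3) (-u-2*v-5*w-5) (3*u-2*v-w-1)
      (by omega) (by omega) (by omega) (by linear_combination 32*hq)
  · exact memL' (m:ℤ) _ _ _ (-u-6*v-3*w-6) (-3*u+2*v-w-2) (-u-2*v+5*w)
      (by omega) (by omega) (by omega) (by linear_combination 32*hq)
  · exact memL' (m:ℤ) _ _ _ (-u-6*v+3*w-3) (-u-2*v-5*w-5) (-3*u+2*v+w-1)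
      (by omega) (by omega) (by omega) (by linear_combination 32*hq)

lemma f_mem (m : ℕ) (x y z : ℤ)
    (hp : ((8*m+6 : ℕ) : ℤ) = ((2:ℕ):ℤ) * tri x + ((3:ℕ):ℤ) * tri y + ((3:ℕ):ℤ) * tri z) :
    ((m : ℕ) : ℤ) = ((1:ℕ):ℤ) * tri (fu x y z) + ((3:ℕ):ℤ) * tri (fv x y z)
      + ((3:ℕ):ℤ) * tri (fw x y z) := by
  have hq : 2*(x^2+x)+3*(y^2+y)+3*(z^2+z) = 16*(m:ℤ)+12 := by
    have tx := two_tri x; have ty := two_tri y; have tz := two_tri z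
    push_cast at hp; linarith
  push_cast
  rw [one_mul]
  unfold fu fv fw
  split_ifs with h1 h2 h2
  · obtain ⟨d1, d2, d3, d4⟩ := keyd1 x y z (m:ℤ) hq h1 h2
    exact memR' (m:ℤ) _ _ _ (-2*x-9*y+3*z-12) (-2*x+y+z-4) (-2*x-y-5*z-12)
      (by omega) (by omega) (by omega) (by linear_combination 32*hq)
  · obtain ⟨d1, d2, d3, d4⟩ := keyd0 x y z (m:ℤ) hq h1 (by omega)
    exact memR' (m:ℤ) _ _ _ (-2*x-9*y-3*z-15) (-2*x+y-z-5) (-2*x-y+5*z-7)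
      (by omega) (by omega) (by omega) (by linear_combination 32*hq)
  · obtain ⟨d1, d2, d3, d4⟩ := keyd3 x y z (m:ℤ) hq (by omega) h2
    exact memR' (m:ℤ) _ _ _ (-2*x-3*y+9*z-6) (-2*x-y-z-6) (2*x-5*y-z-10)
      (by omega) (by omega) (by omega) (by linear_combination 32*hq)
  · obtain ⟨d1, d2, d3, d4⟩ := keyd2 x y z (m:ℤ) hq (by omega) (by omega)
    exact memR' (m:ℤ) _ _ _ (-2*x-3*y-9*z-15) (-2*x-y+z-5) (2*x-5*y+z-9)
      (by omega) (by omega) (by omega) (by linear_combination 32*hq)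

/- ## The equivalence -/

def gmap (m : ℕ)
    (q : Bool × {p : ℤ × ℤ × ℤ // ((m : ℕ) : ℤ) = ((1:ℕ):ℤ) * tri p.1 + ((3:ℕ):ℤ) * tri p.2.1 + ((3:ℕ):ℤ) * tri p.2.2}) :
    {p : ℤ × ℤ × ℤ // ((8*m+6 : ℕ) : ℤ) = ((2:ℕ):ℤ) * tri p.1 + ((3:ℕ):ℤ) * tri p.2.1 + ((3:ℕ):ℤ) * tri p.2.2} :=
  ⟨(gx q.2.1.1 q.2.1.2.1 q.2.1.2.2, gy q.2.1.1 q.2.1.2.1 q.2.1.2.2,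
    gz q.1 q.2.1.1 q.2.1.2.1 q.2.1.2.2), g_mem m q.1 _ _ _ q.2.2⟩

def fmap (m : ℕ)
    (s : {p : ℤ × ℤ × ℤ // ((8*m+6 : ℕ) : ℤ) = ((2:ℕ):ℤ) * tri p.1 + ((3:ℕ):ℤ) * tri p.2.1 + ((3:ℕ):ℤ) * tri p.2.2}) :
    Bool × {p : ℤ × ℤ × ℤ // ((m : ℕ) : ℤ) = ((1:ℕ):ℤ) * tri p.1 + ((3:ℕ):ℤ) * tri p.2.1 + ((3:ℕ):ℤ) * tri p.2.2} :=
  (fb s.1.2.1 s.1.2.2,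
   ⟨(fu s.1.1 s.1.2.1 s.1.2.2, fv s.1.1 s.1.2.1 s.1.2.2, fw s.1.1 s.1.2.1 s.1.2.2),
    f_mem m _ _ _ s.2⟩)

set_option maxHeartbeats 1000000 in
lemma gf (m : ℕ) (q) : fmap m (gmap m q) = q := by
  obtain ⟨b, ⟨⟨u, v, w⟩, hp⟩⟩ := q
  rcases Int.emod_two_eq (u+w) with h | h <;> cases b
  · simp only [fmap, gmap, gz, gx, gy, gzt, gzf, h, Bool.false_eq_true, reduceIte]
    obtain ⟨A, hA⟩ : ∃ A, (-u-6*v-3*w-6)/2 = A := ⟨_, rfl⟩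
    obtain ⟨B, hB⟩ : ∃ B, (-3*u+2*v-w-2)/2 = B := ⟨_, rfl⟩
    obtain ⟨C, hC⟩ : ∃ C, (u+2*v-5*w-2)/2 = C := ⟨_, rfl⟩
    have hA2 : 2*A = -u-6*v-3*w-6 := by omega
    have hB2 : 2*B = -3*u+2*v-w-2 := by omega
    have hC2 : 2*C = u+2*v-5*w-2 := by omega
    refine pext ?_ (Subtype.ext (pext ?_ (pext ?_ ?_))) <;>
      simp only [hA, hB, hC, fb, fu, fv, fw] <;> split_ifs <;>
      first | rfl | omega | (exfalso; omega)
  · simp only [fmap, gmap, gz, gx, gy, gzt, gzf, h, Bool.false_eq_true, reduceIte]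
    obtain ⟨A, hA⟩ : ∃ A, (-u-6*v-3*w-6)/2 = A := ⟨_, rfl⟩
    obtain ⟨B, hB⟩ : ∃ B, (-3*u+2*v-w-2)/2 = B := ⟨_, rfl⟩
    obtain ⟨C, hC⟩ : ∃ C, (-u-2*v+5*w)/2 = C := ⟨_, rfl⟩
    have hA2 : 2*A = -u-6*v-3*w-6 := by omega
    have hB2 : 2*B = -3*u+2*v-w-2 := by omega
    have hC2 : 2*C = -u-2*v+5*w := by omega
    refine pext ?_ (Subtype.ext (pext ?_ (pext ?_ ?_))) <;>
      simp only [hA, hB, hC, fb, fu, fv, fw] <;> split_ifs <;>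
      first | rfl | omega | (exfalso; omega)
  · simp only [fmap, gmap, gz, gx, gy, gzt, gzf, h, Bool.false_eq_true, reduceIte]
    obtain ⟨A, hA⟩ : ∃ A, (-u-6*v+3*w-3)/2 = A := ⟨_, rfl⟩
    obtain ⟨B, hB⟩ : ∃ B, (-u-2*v-5*w-5)/2 = B := ⟨_, rfl⟩
    obtain ⟨C, hC⟩ : ∃ C, (3*u-2*v-w-1)/2 = C := ⟨_, rfl⟩
    have hA2 : 2*A = -u-6*v+3*w-3 := by omega
    have hB2 : 2*B = -u-2*v-5*w-5 := by omega
    have hC2 : 2*C = 3*u-2*v-w-1 := by omega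
    refine pext ?_ (Subtype.ext (pext ?_ (pext ?_ ?_))) <;>
      simp only [hA, hB, hC, fb, fu, fv, fw] <;> split_ifs <;>
      first | rfl | omega | (exfalso; omega)
  · simp only [fmap, gmap, gz, gx, gy, gzt, gzf, h, Bool.false_eq_true, reduceIte]
    obtain ⟨A, hA⟩ : ∃ A, (-u-6*v+3*w-3)/2 = A := ⟨_, rfl⟩
    obtain ⟨B, hB⟩ : ∃ B, (-u-2*v-5*w-5)/2 = B := ⟨_, rfl⟩
    obtain ⟨C, hC⟩ : ∃ C, (-3*u+2*v+w-1)/2 = C := ⟨_, rfl⟩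
    have hA2 : 2*A = -u-6*v+3*w-3 := by omega
    have hB2 : 2*B = -u-2*v-5*w-5 := by omega
    have hC2 : 2*C = -3*u+2*v+w-1 := by omega
    refine pext ?_ (Subtype.ext (pext ?_ (pext ?_ ?_))) <;>
      simp only [hA, hB, hC, fb, fu, fv, fw] <;> split_ifs <;>
      first | rfl | omega | (exfalso; omega)

set_option maxHeartbeats 1000000 in
lemma fg (m : ℕ) (s) : gmap m (fmap m s) = s := by
  obtain ⟨⟨x, y, z⟩, hp⟩ := s
  have hq : 2*(x^2+x)+3*(y^2+y)+3*(z^2+z) = 16*(m:ℤ)+12 := by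
    have tx := two_tri x; have ty := two_tri y; have tz := two_tri z
    push_cast at hp; linarith
  have h1 : (x+y) % 2 = 0 ∨ (x+y) % 2 = 1 := Int.emod_two_eq _
  have h2 : (y+z) % 2 = 0 ∨ (y+z) % 2 = 1 := Int.emod_two_eq _
  apply Subtype.ext
  rcases h1 with h1 | h1 <;> rcases h2 with h2 | h2
  · obtain ⟨d1, d2, d3, d4⟩ := keyd1 x y z (m:ℤ) hq h1 h2
    simp only [gmap, fmap, fb, fu, fv, fw, h1, h2, Bool.false_eq_true, one_ne_zero,
      if_false, reduceIte, gz]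
    obtain ⟨a, ha⟩ := d1; obtain ⟨c2, hc2⟩ := d2; obtain ⟨c3, hc3⟩ := d3
    rw [show (-2*x-9*y+3*z-12)/16 = -a by omega, show (-2*x+y+z-4)/8 = -c2 by omega,
      show (-2*x-y-5*z-12)/16 = -c3 by omega]
    clear hq hp
    refine pext ?_ (pext ?_ ?_) <;>
      simp only [gx, gy, gzt, gzf] <;> split_ifs <;> first | omega | (exfalso; omega)
  · obtain ⟨d1, d2, d3, d4⟩ := keyd0 x y z (m:ℤ) hq h1 h2
    simp only [gmap, fmap, fb, fu, fv, fw, h1, h2, Bool.false_eq_true, one_ne_zero,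
      if_false, reduceIte, gz]
    obtain ⟨a, ha⟩ := d1; obtain ⟨c2, hc2⟩ := d2; obtain ⟨c3, hc3⟩ := d3
    rw [show (-2*x-9*y-3*z-15)/16 = -a by omega, show (-2*x+y-z-5)/8 = -c2 by omega,
      show (-2*x-y+5*z-7)/16 = -c3 by omega]
    clear hq hp
    refine pext ?_ (pext ?_ ?_) <;>
      simp only [gx, gy, gzt, gzf] <;> split_ifs <;> first | omega | (exfalso; omega)
  · obtain ⟨d1, d2, d3, d4⟩ := keyd3 x y z (m:ℤ) hq h1 h2
    simp only [gmap, fmap, fb, fu, fv, fw, h1, h2, Bool.false_eq_true, one_ne_zero,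
      if_false, reduceIte, gz]
    obtain ⟨a, ha⟩ := d1; obtain ⟨c2, hc2⟩ := d2; obtain ⟨c3, hc3⟩ := d3
    rw [show (-2*x-3*y+9*z-6)/16 = -a by omega, show (-2*x-y-z-6)/8 = -c2 by omega,
      show (2*x-5*y-z-10)/16 = c3 by omega]
    clear hq hp
    refine pext ?_ (pext ?_ ?_) <;>
      simp only [gx, gy, gzt, gzf] <;> split_ifs <;> first | omega | (exfalso; omega)
  · obtain ⟨d1, d2, d3, d4⟩ := keyd2 x y z (m:ℤ) hq h1 h2
    simp only [gmap, fmap, fb, fu, fv, fw, h1, h2, Bool.false_eq_true, one_ne_zero,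
      if_false, reduceIte, gz]
    obtain ⟨a, ha⟩ := d1; obtain ⟨c2, hc2⟩ := d2; obtain ⟨c3, hc3⟩ := d3
    rw [show (-2*x-3*y-9*z-15)/16 = -a by omega, show (-2*x-y+z-5)/8 = -c2 by omega,
      show (2*x-5*y+z-9)/16 = c3 by omega]
    clear hq hp
    refine pext ?_ (pext ?_ ?_) <;>
      simp only [gx, gy, gzt, gzf] <;> split_ifs <;> first | omega | (exfalso; omega)

noncomputable def mainEquiv (m : ℕ) :
    {p : ℤ × ℤ × ℤ // ((8*m+6 : ℕ) : ℤ) = ((2:ℕ):ℤ) * tri p.1 + ((3:ℕ):ℤ) * tri p.2.1 + ((3:ℕ):ℤ) * tri p.2.2} ≃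
    Bool × {p : ℤ × ℤ × ℤ // ((m : ℕ) : ℤ) = ((1:ℕ):ℤ) * tri p.1 + ((3:ℕ):ℤ) * tri p.2.1 + ((3:ℕ):ℤ) * tri p.2.2} where
  toFun := fmap m
  invFun := gmap m
  left_inv := fg m
  right_inv := gf m

theorem stmt2 (m : ℕ) : t 2 3 3 (8 * m + 6) = 2 * t 1 3 3 m := by
  unfold t
  rw [Nat.card_congr (mainEquiv m), Nat.card_prod]
  simp [Nat.card_eq_fintype_card]
end

section
/- For every nonnegative integer m, t(2,3,3;32m+27) = 4·t(1,3,3;m). -/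
lemma tri_two (x : ℤ) : 2 * tri x = x^2 + x := by
  have h : (2:ℤ) ∣ x * (x+1) := (Int.even_mul_succ_self x).two_dvd
  unfold tri
  rw [Int.mul_ediv_cancel' h]; ring

lemma sq16_odd (x : ℤ) (h : x % 2 = 1) : ∃ k, x^2 = 16*k+1 ∨ x^2 = 16*k+9 := by
  obtain ⟨a, rfl⟩ : ∃ a, x = 2*a+1 := ⟨(x-1)/2, by omega⟩
  obtain ⟨j, hj⟩ : ∃ j, a*(a+1) = 2*j := by
    rcases Int.even_mul_succ_self a with ⟨j, hj⟩
    exact ⟨j, by omega⟩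
  obtain ⟨i, hi⟩ : ∃ i, j = 2*i ∨ j = 2*i+1 := ⟨j/2, by omega⟩
  refine ⟨i, ?_⟩
  rcases hi with hi | hi <;> subst hi
  · left; linear_combination 4*hj
  · right; linear_combination 4*hj

lemma sq16_even (x : ℤ) (h : x % 2 = 0) : ∃ k, x^2 = 16*k ∨ x^2 = 16*k+4 := by
  obtain ⟨a, rfl⟩ : ∃ a, x = 2*a := ⟨x/2, by omega⟩
  rcases Int.even_or_odd a with ⟨b, rfl⟩ | ⟨b, rfl⟩
  · exact ⟨b^2, Or.inl (by ring)⟩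
  · exact ⟨b^2+b, Or.inr (by ring)⟩

lemma step1' (n u σ e A B : ℤ) (hu : u % 2 = 1) (hσ : σ % 2 = 1) (hn : n % 8 = 7)
    (E : u^2 + 3*σ^2 + 12*e^2 = 16*n)
    (hA : 4*A = u + 3*σ) (hB : 4*B = u - σ) :
    e % 2 = 1 ∧ A % 2 = 1 ∧ B % 4 = 0 ∧ A^2 + 3*B^2 + 3*e^2 = 4*n := by
  obtain ⟨ku, hku⟩ := sq16_odd u hu
  obtain ⟨kσ, hkσ⟩ := sq16_odd σ hσ
  have he : e % 2 = 1 := by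
    rcases Int.emod_two_eq e with h2 | h2
    · exfalso
      obtain ⟨ke, hke⟩ := sq16_even e h2
      rcases hku with h | h <;> rcases hkσ with h' | h' <;> rcases hke with h'' | h'' <;>
        rw [h, h', h''] at E <;> omega
    · exact h2
  have eq16 : 16*(A^2 + 3*B^2 + 3*e^2) = 16*(4*n) := by
    linear_combination (4*A+u+3*σ)*hA + 3*(4*B+u-σ)*hB + 4*E
  have eq4 : A^2 + 3*B^2 + 3*e^2 = 4*n := by linarith
  have hBeven : B % 2 = 0 := by
    rcases Int.emod_two_eq B with h2 | h2
    · exact h2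
    · exfalso
      have hAe : A % 2 = 0 := by omega
      obtain ⟨kA, hkA⟩ := sq16_even A hAe
      obtain ⟨kB, hkB⟩ := sq16_odd B h2
      obtain ⟨ke, hke⟩ := sq16_odd e he
      rcases hkA with h | h <;> rcases hkB with h' | h' <;> rcases hke with h'' | h'' <;>
        rw [h, h', h''] at eq4 <;> omega
  have hAodd : A % 2 = 1 := by omega
  have hB4 : B % 4 = 0 := by
    rcases (by omega : B % 4 = 0 ∨ B % 4 = 2) with h4 | h4
    · exact h4
    · exfalso
      obtain ⟨C, hC2⟩ : ∃ C, B = 2*C := ⟨B/2, by omega⟩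
      have hCodd : C % 2 = 1 := by omega
      have eqC : A^2 + 12*C^2 + 3*e^2 = 4*n := by
        linear_combination eq4 - 3*(B+2*C)*hC2
      obtain ⟨kA, hkA⟩ := sq16_odd A hAodd
      obtain ⟨kC, hkC⟩ := sq16_odd C hCodd
      obtain ⟨ke, hke⟩ := sq16_odd e he
      rcases hkA with h | h <;> rcases hkC with h' | h' <;> rcases hke with h'' | h'' <;>
        rw [h, h', h''] at eqC <;> omega
  exact ⟨he, hAodd, hB4, eq4⟩

lemma step1 (n u σ e A B : ℤ) (hu : u % 2 = 1) (hσ : σ % 2 = 1) (hn : n % 8 = 7)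
    (E : u^2 + 3*σ^2 + 12*e^2 = 16*n)
    (hAB : (4*A = u + 3*σ ∧ 4*B = u - σ) ∨ (4*A = u - 3*σ ∧ 4*B = u + σ)) :
    e % 2 = 1 ∧ A % 2 = 1 ∧ B % 4 = 0 ∧ A^2 + 3*B^2 + 3*e^2 = 4*n := by
  rcases hAB with ⟨hA, hB⟩ | ⟨hA, hB⟩
  · exact step1' n u σ e A B hu hσ hn E hA hB
  · exact step1' n u (-σ) e A B hu (by omega) hn (by linear_combination E)
      (by linarith) (by linarith)

lemma step2' (n A e h P Q : ℤ) (hA : A % 2 = 1) (he : e % 2 = 1) (hn : n % 8 = 7)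
    (E : A^2 + 3*e^2 + 48*h^2 = 4*n)
    (hP : 4*P = A + 3*e) (hQ : 4*Q = A - e) :
    P % 2 = 0 ∧ Q % 2 = 1 ∧ P^2 + 3*Q^2 + 12*h^2 = n := by
  have eq16 : 16*(P^2 + 3*Q^2 + 12*h^2) = 16*n := by
    linear_combination (4*P+A+3*e)*hP + 3*(4*Q+A-e)*hQ + 4*E
  have eqn : P^2 + 3*Q^2 + 12*h^2 = n := by linarith
  have hPeven : P % 2 = 0 := by
    rcases Int.emod_two_eq P with h2 | h2
    · exact h2
    · exfalso
      have hQe : Q % 2 = 0 := by omega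
      obtain ⟨kP, hkP⟩ := sq16_odd P h2
      obtain ⟨kQ, hkQ⟩ := sq16_even Q hQe
      rcases Int.emod_two_eq h with hh | hh
      · obtain ⟨kh, hkh⟩ := sq16_even h hh
        rcases hkP with h' | h' <;> rcases hkQ with h'' | h'' <;> rcases hkh with h''' | h''' <;>
          rw [h', h'', h'''] at eqn <;> omega
      · obtain ⟨kh, hkh⟩ := sq16_odd h hh
        rcases hkP with h' | h' <;> rcases hkQ with h'' | h'' <;> rcases hkh with h''' | h''' <;>
          rw [h', h'', h'''] at eqn <;> omega
  exact ⟨hPeven, by omega, eqn⟩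

lemma step2 (n A e h P Q : ℤ) (hA : A % 2 = 1) (he : e % 2 = 1) (hn : n % 8 = 7)
    (E : A^2 + 3*e^2 + 48*h^2 = 4*n)
    (hPQ : (4*P = A + 3*e ∧ 4*Q = A - e) ∨ (4*P = A - 3*e ∧ 4*Q = A + e)) :
    P % 2 = 0 ∧ Q % 2 = 1 ∧ P^2 + 3*Q^2 + 12*h^2 = n := by
  rcases hPQ with ⟨hP, hQ⟩ | ⟨hP, hQ⟩
  · exact step2' n A e h P Q hA he hn E hP hQ
  · exact step2' n A (-e) h P Q hA (by omega) hn (by linear_combination E)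
      (by linarith) (by linarith)

/-- The parity fact for C-triples: a₀ + h is odd. -/
lemma C_par (n a0 b0 h : ℤ) (hn : n % 8 = 7) (hc : n = 4*a0^2 + 3*(2*b0+1)^2 + 12*h^2) :
    (a0 + h) % 2 = 1 := by
  obtain ⟨kb, hkb⟩ := sq16_odd (2*b0+1) (by omega)
  rcases Int.emod_two_eq a0 with h1 | h1 <;> rcases Int.emod_two_eq h with h2 | h2
  · exfalso
    obtain ⟨ka, hka⟩ := sq16_even a0 h1
    obtain ⟨kh, hkh⟩ := sq16_even h h2
    rcases hka with h' | h' <;> rcases hkh with h'' | h'' <;> rcases hkb with h''' | h''' <;>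
      rw [h', h'', h'''] at hc <;> omega
  · omega
  · omega
  · exfalso
    obtain ⟨ka, hka⟩ := sq16_odd a0 h1
    obtain ⟨kh, hkh⟩ := sq16_odd h h2
    rcases hka with h' | h' <;> rcases hkh with h'' | h'' <;> rcases hkb with h''' | h''' <;>
      rw [h', h'', h'''] at hc <;> omega

def F1 (p : ℤ × ℤ × ℤ) : (ℤ × ℤ × ℤ) × Bool :=
  if (p.1 - p.2.2) % 2 = 0 then
    (((p.1 + 3*p.2.2 + 2)/2, p.2.1, (p.1 - p.2.2)/2), true)
  else
    (((p.1 - 3*p.2.2 - 1)/2, p.2.1, (p.1 + p.2.2 + 1)/2), false)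

def G1 (q : (ℤ × ℤ × ℤ) × Bool) : ℤ × ℤ × ℤ :=
  ((q.1.1 + 3*q.1.2.2 - 1)/2, q.1.2.1,
   if q.2 then (q.1.1 - q.1.2.2 - 1)/2 else (q.1.2.2 - q.1.1 - 1)/2)

lemma G1_F1 (p : ℤ × ℤ × ℤ) : G1 (F1 p) = p := by
  obtain ⟨x, y, z⟩ := p
  simp only [F1]
  split_ifs with h1 <;> simp [G1, Prod.ext_iff] <;> omega

lemma F1_mem (m x y z : ℤ) (hm : m = tri x + 3*tri y + 3*tri z) :
    8*m+7 = 4*(F1 (x,y,z)).1.1^2 + 3*(2*(F1 (x,y,z)).1.2.1+1)^2 + 12*(F1 (x,y,z)).1.2.2^2 := by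
  have t1 := tri_two x; have t2 := tri_two y; have t3 := tri_two z
  simp only [F1]
  split_ifs with h1
  · simp only
    have ha : (x + 3*z + 2)/2 = (x-z)/2 + 2*z + 1 := by omega
    rw [ha]
    set k := (x-z)/2 with hk
    have hw : x - z = 2*k := by omega
    linear_combination 8*hm + 4*t1 + 12*t2 + 12*t3 + (4*x+4*z+8*k+4)*hw
  · simp only
    have ha : (x - 3*z - 1)/2 = (x+z+1)/2 - 2*z - 1 := by omega
    rw [ha]
    set k := (x+z+1)/2 with hk
    have hw : x + z + 1 = 2*k := by omega
    linear_combination 8*hm + 4*t1 + 12*t2 + 12*t3 + (4*x+8*k-4*z)*hw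

lemma F1_G1 (n a0 b0 h : ℤ) (hn : n % 8 = 7) (hc : n = 4*a0^2 + 3*(2*b0+1)^2 + 12*h^2)
    (bit : Bool) : F1 (G1 ((a0,b0,h), bit)) = ((a0,b0,h), bit) := by
  have hpar := C_par n a0 b0 h hn hc
  rcases bit
  · simp only [G1, Bool.false_eq_true, if_false]
    simp only [F1]
    rw [if_neg (by omega)]
    simp [Prod.ext_iff]
    omega
  · simp only [G1, if_true]
    simp only [F1]
    rw [if_pos (by omega)]
    simp [Prod.ext_iff]
    omega

lemma G1_mem (n m a0 b0 h : ℤ) (hn : n = 8*m+7) (hc : n = 4*a0^2 + 3*(2*b0+1)^2 + 12*h^2)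
    (bit : Bool) :
    m = tri (G1 ((a0,b0,h), bit)).1 + 3*tri (G1 ((a0,b0,h), bit)).2.1 + 3*tri (G1 ((a0,b0,h), bit)).2.2 := by
  have hpar := C_par n a0 b0 h (by omega) hc
  obtain ⟨j, hj⟩ : ∃ j, a0 = h + 2*j + 1 ∨ a0 = h + 2*j := ⟨(a0-h)/2, by omega⟩
  rcases hj with hj | hj
  · subst hj
    rcases bit <;> simp only [G1, if_true, if_false, Bool.false_eq_true]
    · -- bit = false : z = (h - a0 - 1)/2 = -j-1
      rw [show ((h + 2*j + 1) + 3*h - 1)/2 = 2*h + j from by omega,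
          show (h - (h + 2*j + 1) - 1)/2 = -j-1 from by omega]
      have t1 := tri_two (2*h+j); have t2 := tri_two b0; have t3 := tri_two (-j-1)
      linarith [hc, t1, t2, t3,
        show (8:ℤ)*m = 4*((2*h+j)^2 + (2*h+j)) + 12*(b0^2+b0) + 12*((-j-1)^2+(-j-1)) from by nlinarith [hc]]
    · rw [show ((h + 2*j + 1) + 3*h - 1)/2 = 2*h + j from by omega,
          show ((h + 2*j + 1) - h - 1)/2 = j from by omega]
      have t1 := tri_two (2*h+j); have t2 := tri_two b0; have t3 := tri_two j
      linarith [hc, t1, t2, t3,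
        show (8:ℤ)*m = 4*((2*h+j)^2 + (2*h+j)) + 12*(b0^2+b0) + 12*(j^2+j) from by nlinarith [hc]]
  · exfalso; omega

/-- pair-down map -/
def PD (u s : ℤ) : ℤ × ℤ :=
  if (u - s) % 4 = 0 then ((u+3*s)/4, (u-s)/4) else ((u-3*s)/4, (u+s)/4)

lemma PD_cases (u s : ℤ) (hu : u % 2 = 1) (hs : s % 2 = 1) :
    ((u - s) % 4 = 0 ∧ 4*(PD u s).1 = u + 3*s ∧ 4*(PD u s).2 = u - s) ∨
    ((u - s) % 4 = 2 ∧ 4*(PD u s).1 = u - 3*s ∧ 4*(PD u s).2 = u + s) := by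
  unfold PD
  split_ifs with h
  · exact Or.inl ⟨h, by omega, by omega⟩
  · exact Or.inr ⟨by omega, by omega, by omega⟩

def sg (y z : ℤ) : ℤ := if (y+z) % 2 = 0 then y+z+1 else y-z
def ev (y z : ℤ) : ℤ := if (y+z) % 2 = 0 then (y-z)/2 else (y+z+1)/2

def F2 (p : ℤ × ℤ × ℤ) : (ℤ × ℤ × ℤ) × (Bool × Bool × Bool) :=
  (((PD (PD (2*p.1+1) (sg p.2.1 p.2.2)).1 (ev p.2.1 p.2.2)).1/2,
    ((PD (PD (2*p.1+1) (sg p.2.1 p.2.2)).1 (ev p.2.1 p.2.2)).2 - 1)/2,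
    (PD (2*p.1+1) (sg p.2.1 p.2.2)).2/4),
   (decide ((p.2.1+p.2.2) % 2 = 0),
    decide ((2*p.1+1 - sg p.2.1 p.2.2) % 4 = 0),
    decide (((PD (2*p.1+1) (sg p.2.1 p.2.2)).1 - ev p.2.1 p.2.2) % 4 = 0)))

def sgE (q : (ℤ × ℤ × ℤ) × (Bool × Bool × Bool)) : ℤ :=
  if q.2.2.1 then 2*q.1.1 + 3*(2*q.1.2.1+1) - 4*q.1.2.2
  else 4*q.1.2.2 - (2*q.1.1 + 3*(2*q.1.2.1+1))

def evE (q : (ℤ × ℤ × ℤ) × (Bool × Bool × Bool)) : ℤ :=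
  if q.2.2.2 then 2*q.1.1 - (2*q.1.2.1+1) else (2*q.1.2.1+1) - 2*q.1.1

def sE (q : (ℤ × ℤ × ℤ) × (Bool × Bool × Bool)) : ℤ :=
  if q.2.1 then sgE q else 2*evE q

def dE (q : (ℤ × ℤ × ℤ) × (Bool × Bool × Bool)) : ℤ :=
  if q.2.1 then 2*evE q else sgE q

def G2 (q : (ℤ × ℤ × ℤ) × (Bool × Bool × Bool)) : ℤ × ℤ × ℤ :=
  ((2*q.1.1 + 3*(2*q.1.2.1+1) + 12*q.1.2.2 - 1)/2,
   (sE q + dE q - 1)/2,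
   (sE q - dE q - 1)/2)


set_option maxHeartbeats 2000000 in
lemma F2_spec (m x y z : ℤ) (hm : 32*m+27 = 2*tri x + 3*tri y + 3*tri z) :
    (8*m+7 = 4*(F2 (x,y,z)).1.1^2 + 3*(2*(F2 (x,y,z)).1.2.1+1)^2 + 12*(F2 (x,y,z)).1.2.2^2)
    ∧ G2 (F2 (x,y,z)) = (x,y,z) := by
  have t1 := tri_two x
  have t2 := tri_two y
  have t3 := tri_two z
  by_cases h1 : (y + z) % 2 = 0
  · have hsg : sg y z = y + z + 1 := by simp [sg, h1]
    have hev : ev y z = (y - z)/2 := by simp [ev, h1]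
    simp only [F2]
    rw [hsg, hev]
    set e := (y - z)/2 with hedef
    have hw : y - z = 2*e := by omega
    have hE : (2*x+1)^2 + 3*(y+z+1)^2 + 12*e^2 = 16*(8*m+7) := by
      linear_combination (-4)*hm - 4*t1 - 6*t2 - 6*t3 - 3*(y-z+2*e)*hw
    have hABfull := PD_cases (2*x+1) (y+z+1) (by omega) (by omega)
    set A := (PD (2*x+1) (y+z+1)).1 with hAdef
    set B := (PD (2*x+1) (y+z+1)).2 with hBdef
    obtain ⟨he, hAodd, hB4, eq4⟩ := step1 (8*m+7) (2*x+1) (y+z+1) e A B (by omega) (by omega)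
      (by omega) hE (hABfull.imp (fun h => ⟨h.2.1, h.2.2⟩) (fun h => ⟨h.2.1, h.2.2⟩))
    obtain ⟨h0, hh0⟩ : ∃ h0, B = 4*h0 := ⟨B/4, by omega⟩
    have hEE : A^2 + 3*e^2 + 48*h0^2 = 4*(8*m+7) := by
      linear_combination eq4 - 3*(B+4*h0)*hh0
    have hPQfull := PD_cases A e hAodd he
    set P := (PD A e).1 with hPdef
    set Q := (PD A e).2 with hQdef
    obtain ⟨hP0, hQ1, eqn⟩ := step2 (8*m+7) A e h0 P Q hAodd he (by omega) hEE
      (hPQfull.imp (fun h => ⟨h.2.1, h.2.2⟩) (fun h => ⟨h.2.1, h.2.2⟩))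
    obtain ⟨a0, ha0⟩ : ∃ a0, P = 2*a0 := ⟨P/2, by omega⟩
    obtain ⟨b0, hb0⟩ : ∃ b0, Q = 2*b0+1 := ⟨(Q-1)/2, by omega⟩
    rw [show P/2 = a0 by omega, show (Q-1)/2 = b0 by omega, show B/4 = h0 by omega]
    constructor
    · linear_combination (-1)*eqn + (P+2*a0)*ha0 + 3*(Q+2*b0+1)*hb0
    · rw [decide_eq_true h1]
      rcases hABfull with ⟨hc2, hA, hB⟩ | ⟨hc2, hA, hB⟩ <;>
        rcases hPQfull with ⟨hc3, hP, hQ⟩ | ⟨hc3, hP, hQ⟩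
      · rw [decide_eq_true hc2, decide_eq_true hc3]
        simp [G2, sE, dE, sgE, evE, Prod.ext_iff]; omega
      · rw [decide_eq_true hc2, decide_eq_false (by omega)]
        simp [G2, sE, dE, sgE, evE, Prod.ext_iff]; omega
      · rw [decide_eq_false (by omega), decide_eq_true hc3]
        simp [G2, sE, dE, sgE, evE, Prod.ext_iff]; omega
      · rw [decide_eq_false (by omega), decide_eq_false (by omega)]
        simp [G2, sE, dE, sgE, evE, Prod.ext_iff]; omega
  · have hsg : sg y z = y - z := by simp [sg, h1]
    have hev : ev y z = (y + z + 1)/2 := by simp [ev, h1]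
    simp only [F2]
    rw [hsg, hev]
    set e := (y + z + 1)/2 with hedef
    have hw : y + z + 1 = 2*e := by omega
    have hE : (2*x+1)^2 + 3*(y-z)^2 + 12*e^2 = 16*(8*m+7) := by
      linear_combination (-4)*hm - 4*t1 - 6*t2 - 6*t3 - 3*(y+z+1+2*e)*hw
    have hABfull := PD_cases (2*x+1) (y-z) (by omega) (by omega)
    set A := (PD (2*x+1) (y-z)).1 with hAdef
    set B := (PD (2*x+1) (y-z)).2 with hBdef
    obtain ⟨he, hAodd, hB4, eq4⟩ := step1 (8*m+7) (2*x+1) (y-z) e A B (by omega) (by omega)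
      (by omega) hE (hABfull.imp (fun h => ⟨h.2.1, h.2.2⟩) (fun h => ⟨h.2.1, h.2.2⟩))
    obtain ⟨h0, hh0⟩ : ∃ h0, B = 4*h0 := ⟨B/4, by omega⟩
    have hEE : A^2 + 3*e^2 + 48*h0^2 = 4*(8*m+7) := by
      linear_combination eq4 - 3*(B+4*h0)*hh0
    have hPQfull := PD_cases A e hAodd he
    set P := (PD A e).1 with hPdef
    set Q := (PD A e).2 with hQdef
    obtain ⟨hP0, hQ1, eqn⟩ := step2 (8*m+7) A e h0 P Q hAodd he (by omega) hEE
      (hPQfull.imp (fun h => ⟨h.2.1, h.2.2⟩) (fun h => ⟨h.2.1, h.2.2⟩))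
    obtain ⟨a0, ha0⟩ : ∃ a0, P = 2*a0 := ⟨P/2, by omega⟩
    obtain ⟨b0, hb0⟩ : ∃ b0, Q = 2*b0+1 := ⟨(Q-1)/2, by omega⟩
    rw [show P/2 = a0 by omega, show (Q-1)/2 = b0 by omega, show B/4 = h0 by omega]
    constructor
    · linear_combination (-1)*eqn + (P+2*a0)*ha0 + 3*(Q+2*b0+1)*hb0
    · rw [decide_eq_false h1]
      rcases hABfull with ⟨hc2, hA, hB⟩ | ⟨hc2, hA, hB⟩ <;>
        rcases hPQfull with ⟨hc3, hP, hQ⟩ | ⟨hc3, hP, hQ⟩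
      · rw [decide_eq_true hc2, decide_eq_true hc3]
        simp [G2, sE, dE, sgE, evE, Prod.ext_iff]; omega
      · rw [decide_eq_true hc2, decide_eq_false (by omega)]
        simp [G2, sE, dE, sgE, evE, Prod.ext_iff]; omega
      · rw [decide_eq_false (by omega), decide_eq_true hc3]
        simp [G2, sE, dE, sgE, evE, Prod.ext_iff]; omega
      · rw [decide_eq_false (by omega), decide_eq_false (by omega)]
        simp [G2, sE, dE, sgE, evE, Prod.ext_iff]; omega

set_option maxHeartbeats 1000000 in
lemma G2_mem (m a0 b0 h : ℤ) (bb : Bool × Bool × Bool)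
    (hc : 8*m+7 = 4*a0^2 + 3*(2*b0+1)^2 + 12*h^2) :
    32*m+27 = 2*tri (G2 ((a0,b0,h),bb)).1 + 3*tri (G2 ((a0,b0,h),bb)).2.1
      + 3*tri (G2 ((a0,b0,h),bb)).2.2 := by
  obtain ⟨b1, b2, b3⟩ := bb
  rcases b1 <;> rcases b2 <;> rcases b3 <;>
    simp only [G2, sE, dE, sgE, evE, if_true, Bool.false_eq_true, if_false]
  · rw [show (2*a0 + 3*(2*b0+1) + 12*h - 1)/2 = a0+3*b0+6*h+1 by omega,
        show (2*((2*b0+1) - 2*a0) + (4*h - (2*a0 + 3*(2*b0+1))) - 1)/2 = -3*a0-b0+2*h-1 by omega,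
        show (2*((2*b0+1) - 2*a0) - (4*h - (2*a0 + 3*(2*b0+1))) - 1)/2 = -a0+5*b0-2*h+2 by omega]
    have k1 := tri_two (a0+3*b0+6*h+1)
    have k2 := tri_two (-3*a0-b0+2*h-1)
    have k3 := tri_two (-a0+5*b0-2*h+2)
    have key : 2*(32*m+27) = 4*tri (a0+3*b0+6*h+1) + 6*tri (-3*a0-b0+2*h-1) + 6*tri (-a0+5*b0-2*h+2) := by
      linear_combination (-2)*k1 - 3*k2 - 3*k3 + 8*hc
    linarith
  · rw [show (2*a0 + 3*(2*b0+1) + 12*h - 1)/2 = a0+3*b0+6*h+1 by omega,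
        show (2*(2*a0 - (2*b0+1)) + (4*h - (2*a0 + 3*(2*b0+1))) - 1)/2 = a0-5*b0+2*h-3 by omega,
        show (2*(2*a0 - (2*b0+1)) - (4*h - (2*a0 + 3*(2*b0+1))) - 1)/2 = 3*a0+b0-2*h by omega]
    have k1 := tri_two (a0+3*b0+6*h+1)
    have k2 := tri_two (a0-5*b0+2*h-3)
    have k3 := tri_two (3*a0+b0-2*h)
    have key : 2*(32*m+27) = 4*tri (a0+3*b0+6*h+1) + 6*tri (a0-5*b0+2*h-3) + 6*tri (3*a0+b0-2*h) := by
      linear_combination (-2)*k1 - 3*k2 - 3*k3 + 8*hc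
    linarith
  · rw [show (2*a0 + 3*(2*b0+1) + 12*h - 1)/2 = a0+3*b0+6*h+1 by omega,
        show (2*((2*b0+1) - 2*a0) + (2*a0 + 3*(2*b0+1) - 4*h) - 1)/2 = -a0+5*b0-2*h+2 by omega,
        show (2*((2*b0+1) - 2*a0) - (2*a0 + 3*(2*b0+1) - 4*h) - 1)/2 = -3*a0-b0+2*h-1 by omega]
    have k1 := tri_two (a0+3*b0+6*h+1)
    have k2 := tri_two (-a0+5*b0-2*h+2)
    have k3 := tri_two (-3*a0-b0+2*h-1)
    have key : 2*(32*m+27) = 4*tri (a0+3*b0+6*h+1) + 6*tri (-a0+5*b0-2*h+2) + 6*tri (-3*a0-b0+2*h-1) := by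
      linear_combination (-2)*k1 - 3*k2 - 3*k3 + 8*hc
    linarith
  · rw [show (2*a0 + 3*(2*b0+1) + 12*h - 1)/2 = a0+3*b0+6*h+1 by omega,
        show (2*(2*a0 - (2*b0+1)) + (2*a0 + 3*(2*b0+1) - 4*h) - 1)/2 = 3*a0+b0-2*h by omega,
        show (2*(2*a0 - (2*b0+1)) - (2*a0 + 3*(2*b0+1) - 4*h) - 1)/2 = a0-5*b0+2*h-3 by omega]
    have k1 := tri_two (a0+3*b0+6*h+1)
    have k2 := tri_two (3*a0+b0-2*h)
    have k3 := tri_two (a0-5*b0+2*h-3)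
    have key : 2*(32*m+27) = 4*tri (a0+3*b0+6*h+1) + 6*tri (3*a0+b0-2*h) + 6*tri (a0-5*b0+2*h-3) := by
      linear_combination (-2)*k1 - 3*k2 - 3*k3 + 8*hc
    linarith
  · rw [show (2*a0 + 3*(2*b0+1) + 12*h - 1)/2 = a0+3*b0+6*h+1 by omega,
        show (4*h - (2*a0 + 3*(2*b0+1)) + (2*((2*b0+1) - 2*a0)) - 1)/2 = -3*a0-b0+2*h-1 by omega,
        show (4*h - (2*a0 + 3*(2*b0+1)) - (2*((2*b0+1) - 2*a0)) - 1)/2 = a0-5*b0+2*h-3 by omega]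
    have k1 := tri_two (a0+3*b0+6*h+1)
    have k2 := tri_two (-3*a0-b0+2*h-1)
    have k3 := tri_two (a0-5*b0+2*h-3)
    have key : 2*(32*m+27) = 4*tri (a0+3*b0+6*h+1) + 6*tri (-3*a0-b0+2*h-1) + 6*tri (a0-5*b0+2*h-3) := by
      linear_combination (-2)*k1 - 3*k2 - 3*k3 + 8*hc
    linarith
  · rw [show (2*a0 + 3*(2*b0+1) + 12*h - 1)/2 = a0+3*b0+6*h+1 by omega,
        show (4*h - (2*a0 + 3*(2*b0+1)) + (2*(2*a0 - (2*b0+1))) - 1)/2 = a0-5*b0+2*h-3 by omega,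
        show (4*h - (2*a0 + 3*(2*b0+1)) - (2*(2*a0 - (2*b0+1))) - 1)/2 = -3*a0-b0+2*h-1 by omega]
    have k1 := tri_two (a0+3*b0+6*h+1)
    have k2 := tri_two (a0-5*b0+2*h-3)
    have k3 := tri_two (-3*a0-b0+2*h-1)
    have key : 2*(32*m+27) = 4*tri (a0+3*b0+6*h+1) + 6*tri (a0-5*b0+2*h-3) + 6*tri (-3*a0-b0+2*h-1) := by
      linear_combination (-2)*k1 - 3*k2 - 3*k3 + 8*hc
    linarith
  · rw [show (2*a0 + 3*(2*b0+1) + 12*h - 1)/2 = a0+3*b0+6*h+1 by omega,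
        show (2*a0 + 3*(2*b0+1) - 4*h + (2*((2*b0+1) - 2*a0)) - 1)/2 = -a0+5*b0-2*h+2 by omega,
        show (2*a0 + 3*(2*b0+1) - 4*h - (2*((2*b0+1) - 2*a0)) - 1)/2 = 3*a0+b0-2*h by omega]
    have k1 := tri_two (a0+3*b0+6*h+1)
    have k2 := tri_two (-a0+5*b0-2*h+2)
    have k3 := tri_two (3*a0+b0-2*h)
    have key : 2*(32*m+27) = 4*tri (a0+3*b0+6*h+1) + 6*tri (-a0+5*b0-2*h+2) + 6*tri (3*a0+b0-2*h) := by
      linear_combination (-2)*k1 - 3*k2 - 3*k3 + 8*hc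
    linarith
  · rw [show (2*a0 + 3*(2*b0+1) + 12*h - 1)/2 = a0+3*b0+6*h+1 by omega,
        show (2*a0 + 3*(2*b0+1) - 4*h + (2*(2*a0 - (2*b0+1))) - 1)/2 = 3*a0+b0-2*h by omega,
        show (2*a0 + 3*(2*b0+1) - 4*h - (2*(2*a0 - (2*b0+1))) - 1)/2 = -a0+5*b0-2*h+2 by omega]
    have k1 := tri_two (a0+3*b0+6*h+1)
    have k2 := tri_two (3*a0+b0-2*h)
    have k3 := tri_two (-a0+5*b0-2*h+2)
    have key : 2*(32*m+27) = 4*tri (a0+3*b0+6*h+1) + 6*tri (3*a0+b0-2*h) + 6*tri (-a0+5*b0-2*h+2) := by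
      linear_combination (-2)*k1 - 3*k2 - 3*k3 + 8*hc
    linarith

set_option maxHeartbeats 1000000 in
lemma F2_G2 (a0 b0 h : ℤ) (bb : Bool × Bool × Bool) :
    F2 (G2 ((a0,b0,h),bb)) = ((a0,b0,h),bb) := by
  obtain ⟨b1, b2, b3⟩ := bb
  rcases b1 <;> rcases b2 <;> rcases b3 <;>
    simp only [G2, sE, dE, sgE, evE, if_true, Bool.false_eq_true, if_false]
  · rw [show (2*a0 + 3*(2*b0+1) + 12*h - 1)/2 = a0+3*b0+6*h+1 by omega,
        show (2*((2*b0+1) - 2*a0) + (4*h - (2*a0 + 3*(2*b0+1))) - 1)/2 = -3*a0-b0+2*h-1 by omega,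
        show (2*((2*b0+1) - 2*a0) - (4*h - (2*a0 + 3*(2*b0+1))) - 1)/2 = -a0+5*b0-2*h+2 by omega]
    simp only [F2]
    have hsg : sg (-3*a0-b0+2*h-1) (-a0+5*b0-2*h+2) = -2*a0-6*b0+4*h-3 := by
      simp only [sg]; rw [if_neg (by omega)]; omega
    have hev : ev (-3*a0-b0+2*h-1) (-a0+5*b0-2*h+2) = -2*a0+2*b0+1 := by
      simp only [ev]; rw [if_neg (by omega)]; omega
    have hPD1 : PD (2*(a0+3*b0+6*h+1)+1) (-2*a0-6*b0+4*h-3) = (2*a0+6*b0+3, 4*h) := by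
      simp only [PD]; rw [if_neg (by omega), Prod.mk.injEq]
      constructor <;> omega
    have hPD2 : PD (2*a0+6*b0+3) (-2*a0+2*b0+1) = (2*a0, 2*b0+1) := by
      simp only [PD]; rw [if_neg (by omega), Prod.mk.injEq]
      constructor <;> omega
    rw [hsg, hev, hPD1]
    dsimp only
    rw [hPD2]
    dsimp only
    rw [show (2*a0)/2 = a0 by omega, show (2*b0+1-1)/2 = b0 by omega,
        show (4*h)/4 = h by omega, decide_eq_false (show ¬((-3*a0-b0+2*h-1 + (-a0+5*b0-2*h+2)) % 2 = 0) by omega), decide_eq_false (show ¬((2*(a0+3*b0+6*h+1)+1 - (-2*a0-6*b0+4*h-3)) % 4 = 0) by omega), decide_eq_false (show ¬((2*a0+6*b0+3 - (-2*a0+2*b0+1)) % 4 = 0) by omega)]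
  · rw [show (2*a0 + 3*(2*b0+1) + 12*h - 1)/2 = a0+3*b0+6*h+1 by omega,
        show (2*(2*a0 - (2*b0+1)) + (4*h - (2*a0 + 3*(2*b0+1))) - 1)/2 = a0-5*b0+2*h-3 by omega,
        show (2*(2*a0 - (2*b0+1)) - (4*h - (2*a0 + 3*(2*b0+1))) - 1)/2 = 3*a0+b0-2*h by omega]
    simp only [F2]
    have hsg : sg (a0-5*b0+2*h-3) (3*a0+b0-2*h) = -2*a0-6*b0+4*h-3 := by
      simp only [sg]; rw [if_neg (by omega)]; omega
    have hev : ev (a0-5*b0+2*h-3) (3*a0+b0-2*h) = 2*a0-2*b0-1 := by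
      simp only [ev]; rw [if_neg (by omega)]; omega
    have hPD1 : PD (2*(a0+3*b0+6*h+1)+1) (-2*a0-6*b0+4*h-3) = (2*a0+6*b0+3, 4*h) := by
      simp only [PD]; rw [if_neg (by omega), Prod.mk.injEq]
      constructor <;> omega
    have hPD2 : PD (2*a0+6*b0+3) (2*a0-2*b0-1) = (2*a0, 2*b0+1) := by
      simp only [PD]; rw [if_pos (by omega), Prod.mk.injEq]
      constructor <;> omega
    rw [hsg, hev, hPD1]
    dsimp only
    rw [hPD2]
    dsimp only
    rw [show (2*a0)/2 = a0 by omega, show (2*b0+1-1)/2 = b0 by omega,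
        show (4*h)/4 = h by omega, decide_eq_false (show ¬((a0-5*b0+2*h-3 + (3*a0+b0-2*h)) % 2 = 0) by omega), decide_eq_false (show ¬((2*(a0+3*b0+6*h+1)+1 - (-2*a0-6*b0+4*h-3)) % 4 = 0) by omega), decide_eq_true (show (2*a0+6*b0+3 - (2*a0-2*b0-1)) % 4 = 0 by omega)]
  · rw [show (2*a0 + 3*(2*b0+1) + 12*h - 1)/2 = a0+3*b0+6*h+1 by omega,
        show (2*((2*b0+1) - 2*a0) + (2*a0 + 3*(2*b0+1) - 4*h) - 1)/2 = -a0+5*b0-2*h+2 by omega,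
        show (2*((2*b0+1) - 2*a0) - (2*a0 + 3*(2*b0+1) - 4*h) - 1)/2 = -3*a0-b0+2*h-1 by omega]
    simp only [F2]
    have hsg : sg (-a0+5*b0-2*h+2) (-3*a0-b0+2*h-1) = 2*a0+6*b0-4*h+3 := by
      simp only [sg]; rw [if_neg (by omega)]; omega
    have hev : ev (-a0+5*b0-2*h+2) (-3*a0-b0+2*h-1) = -2*a0+2*b0+1 := by
      simp only [ev]; rw [if_neg (by omega)]; omega
    have hPD1 : PD (2*(a0+3*b0+6*h+1)+1) (2*a0+6*b0-4*h+3) = (2*a0+6*b0+3, 4*h) := by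
      simp only [PD]; rw [if_pos (by omega), Prod.mk.injEq]
      constructor <;> omega
    have hPD2 : PD (2*a0+6*b0+3) (-2*a0+2*b0+1) = (2*a0, 2*b0+1) := by
      simp only [PD]; rw [if_neg (by omega), Prod.mk.injEq]
      constructor <;> omega
    rw [hsg, hev, hPD1]
    dsimp only
    rw [hPD2]
    dsimp only
    rw [show (2*a0)/2 = a0 by omega, show (2*b0+1-1)/2 = b0 by omega,
        show (4*h)/4 = h by omega, decide_eq_false (show ¬((-a0+5*b0-2*h+2 + (-3*a0-b0+2*h-1)) % 2 = 0) by omega), decide_eq_true (show (2*(a0+3*b0+6*h+1)+1 - (2*a0+6*b0-4*h+3)) % 4 = 0 by omega), decide_eq_false (show ¬((2*a0+6*b0+3 - (-2*a0+2*b0+1)) % 4 = 0) by omega)]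
  · rw [show (2*a0 + 3*(2*b0+1) + 12*h - 1)/2 = a0+3*b0+6*h+1 by omega,
        show (2*(2*a0 - (2*b0+1)) + (2*a0 + 3*(2*b0+1) - 4*h) - 1)/2 = 3*a0+b0-2*h by omega,
        show (2*(2*a0 - (2*b0+1)) - (2*a0 + 3*(2*b0+1) - 4*h) - 1)/2 = a0-5*b0+2*h-3 by omega]
    simp only [F2]
    have hsg : sg (3*a0+b0-2*h) (a0-5*b0+2*h-3) = 2*a0+6*b0-4*h+3 := by
      simp only [sg]; rw [if_neg (by omega)]; omega
    have hev : ev (3*a0+b0-2*h) (a0-5*b0+2*h-3) = 2*a0-2*b0-1 := by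
      simp only [ev]; rw [if_neg (by omega)]; omega
    have hPD1 : PD (2*(a0+3*b0+6*h+1)+1) (2*a0+6*b0-4*h+3) = (2*a0+6*b0+3, 4*h) := by
      simp only [PD]; rw [if_pos (by omega), Prod.mk.injEq]
      constructor <;> omega
    have hPD2 : PD (2*a0+6*b0+3) (2*a0-2*b0-1) = (2*a0, 2*b0+1) := by
      simp only [PD]; rw [if_pos (by omega), Prod.mk.injEq]
      constructor <;> omega
    rw [hsg, hev, hPD1]
    dsimp only
    rw [hPD2]
    dsimp only
    rw [show (2*a0)/2 = a0 by omega, show (2*b0+1-1)/2 = b0 by omega,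
        show (4*h)/4 = h by omega, decide_eq_false (show ¬((3*a0+b0-2*h + (a0-5*b0+2*h-3)) % 2 = 0) by omega), decide_eq_true (show (2*(a0+3*b0+6*h+1)+1 - (2*a0+6*b0-4*h+3)) % 4 = 0 by omega), decide_eq_true (show (2*a0+6*b0+3 - (2*a0-2*b0-1)) % 4 = 0 by omega)]
  · rw [show (2*a0 + 3*(2*b0+1) + 12*h - 1)/2 = a0+3*b0+6*h+1 by omega,
        show (4*h - (2*a0 + 3*(2*b0+1)) + (2*((2*b0+1) - 2*a0)) - 1)/2 = -3*a0-b0+2*h-1 by omega,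
        show (4*h - (2*a0 + 3*(2*b0+1)) - (2*((2*b0+1) - 2*a0)) - 1)/2 = a0-5*b0+2*h-3 by omega]
    simp only [F2]
    have hsg : sg (-3*a0-b0+2*h-1) (a0-5*b0+2*h-3) = -2*a0-6*b0+4*h-3 := by
      simp only [sg]; rw [if_pos (by omega)]; omega
    have hev : ev (-3*a0-b0+2*h-1) (a0-5*b0+2*h-3) = -2*a0+2*b0+1 := by
      simp only [ev]; rw [if_pos (by omega)]; omega
    have hPD1 : PD (2*(a0+3*b0+6*h+1)+1) (-2*a0-6*b0+4*h-3) = (2*a0+6*b0+3, 4*h) := by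
      simp only [PD]; rw [if_neg (by omega), Prod.mk.injEq]
      constructor <;> omega
    have hPD2 : PD (2*a0+6*b0+3) (-2*a0+2*b0+1) = (2*a0, 2*b0+1) := by
      simp only [PD]; rw [if_neg (by omega), Prod.mk.injEq]
      constructor <;> omega
    rw [hsg, hev, hPD1]
    dsimp only
    rw [hPD2]
    dsimp only
    rw [show (2*a0)/2 = a0 by omega, show (2*b0+1-1)/2 = b0 by omega,
        show (4*h)/4 = h by omega, decide_eq_true (show (-3*a0-b0+2*h-1 + (a0-5*b0+2*h-3)) % 2 = 0 by omega), decide_eq_false (show ¬((2*(a0+3*b0+6*h+1)+1 - (-2*a0-6*b0+4*h-3)) % 4 = 0) by omega), decide_eq_false (show ¬((2*a0+6*b0+3 - (-2*a0+2*b0+1)) % 4 = 0) by omega)]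
  · rw [show (2*a0 + 3*(2*b0+1) + 12*h - 1)/2 = a0+3*b0+6*h+1 by omega,
        show (4*h - (2*a0 + 3*(2*b0+1)) + (2*(2*a0 - (2*b0+1))) - 1)/2 = a0-5*b0+2*h-3 by omega,
        show (4*h - (2*a0 + 3*(2*b0+1)) - (2*(2*a0 - (2*b0+1))) - 1)/2 = -3*a0-b0+2*h-1 by omega]
    simp only [F2]
    have hsg : sg (a0-5*b0+2*h-3) (-3*a0-b0+2*h-1) = -2*a0-6*b0+4*h-3 := by
      simp only [sg]; rw [if_pos (by omega)]; omega
    have hev : ev (a0-5*b0+2*h-3) (-3*a0-b0+2*h-1) = 2*a0-2*b0-1 := by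
      simp only [ev]; rw [if_pos (by omega)]; omega
    have hPD1 : PD (2*(a0+3*b0+6*h+1)+1) (-2*a0-6*b0+4*h-3) = (2*a0+6*b0+3, 4*h) := by
      simp only [PD]; rw [if_neg (by omega), Prod.mk.injEq]
      constructor <;> omega
    have hPD2 : PD (2*a0+6*b0+3) (2*a0-2*b0-1) = (2*a0, 2*b0+1) := by
      simp only [PD]; rw [if_pos (by omega), Prod.mk.injEq]
      constructor <;> omega
    rw [hsg, hev, hPD1]
    dsimp only
    rw [hPD2]
    dsimp only
    rw [show (2*a0)/2 = a0 by omega, show (2*b0+1-1)/2 = b0 by omega,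
        show (4*h)/4 = h by omega, decide_eq_true (show (a0-5*b0+2*h-3 + (-3*a0-b0+2*h-1)) % 2 = 0 by omega), decide_eq_false (show ¬((2*(a0+3*b0+6*h+1)+1 - (-2*a0-6*b0+4*h-3)) % 4 = 0) by omega), decide_eq_true (show (2*a0+6*b0+3 - (2*a0-2*b0-1)) % 4 = 0 by omega)]
  · rw [show (2*a0 + 3*(2*b0+1) + 12*h - 1)/2 = a0+3*b0+6*h+1 by omega,
        show (2*a0 + 3*(2*b0+1) - 4*h + (2*((2*b0+1) - 2*a0)) - 1)/2 = -a0+5*b0-2*h+2 by omega,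
        show (2*a0 + 3*(2*b0+1) - 4*h - (2*((2*b0+1) - 2*a0)) - 1)/2 = 3*a0+b0-2*h by omega]
    simp only [F2]
    have hsg : sg (-a0+5*b0-2*h+2) (3*a0+b0-2*h) = 2*a0+6*b0-4*h+3 := by
      simp only [sg]; rw [if_pos (by omega)]; omega
    have hev : ev (-a0+5*b0-2*h+2) (3*a0+b0-2*h) = -2*a0+2*b0+1 := by
      simp only [ev]; rw [if_pos (by omega)]; omega
    have hPD1 : PD (2*(a0+3*b0+6*h+1)+1) (2*a0+6*b0-4*h+3) = (2*a0+6*b0+3, 4*h) := by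
      simp only [PD]; rw [if_pos (by omega), Prod.mk.injEq]
      constructor <;> omega
    have hPD2 : PD (2*a0+6*b0+3) (-2*a0+2*b0+1) = (2*a0, 2*b0+1) := by
      simp only [PD]; rw [if_neg (by omega), Prod.mk.injEq]
      constructor <;> omega
    rw [hsg, hev, hPD1]
    dsimp only
    rw [hPD2]
    dsimp only
    rw [show (2*a0)/2 = a0 by omega, show (2*b0+1-1)/2 = b0 by omega,
        show (4*h)/4 = h by omega, decide_eq_true (show (-a0+5*b0-2*h+2 + (3*a0+b0-2*h)) % 2 = 0 by omega), decide_eq_true (show (2*(a0+3*b0+6*h+1)+1 - (2*a0+6*b0-4*h+3)) % 4 = 0 by omega), decide_eq_false (show ¬((2*a0+6*b0+3 - (-2*a0+2*b0+1)) % 4 = 0) by omega)]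
  · rw [show (2*a0 + 3*(2*b0+1) + 12*h - 1)/2 = a0+3*b0+6*h+1 by omega,
        show (2*a0 + 3*(2*b0+1) - 4*h + (2*(2*a0 - (2*b0+1))) - 1)/2 = 3*a0+b0-2*h by omega,
        show (2*a0 + 3*(2*b0+1) - 4*h - (2*(2*a0 - (2*b0+1))) - 1)/2 = -a0+5*b0-2*h+2 by omega]
    simp only [F2]
    have hsg : sg (3*a0+b0-2*h) (-a0+5*b0-2*h+2) = 2*a0+6*b0-4*h+3 := by
      simp only [sg]; rw [if_pos (by omega)]; omega
    have hev : ev (3*a0+b0-2*h) (-a0+5*b0-2*h+2) = 2*a0-2*b0-1 := by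
      simp only [ev]; rw [if_pos (by omega)]; omega
    have hPD1 : PD (2*(a0+3*b0+6*h+1)+1) (2*a0+6*b0-4*h+3) = (2*a0+6*b0+3, 4*h) := by
      simp only [PD]; rw [if_pos (by omega), Prod.mk.injEq]
      constructor <;> omega
    have hPD2 : PD (2*a0+6*b0+3) (2*a0-2*b0-1) = (2*a0, 2*b0+1) := by
      simp only [PD]; rw [if_pos (by omega), Prod.mk.injEq]
      constructor <;> omega
    rw [hsg, hev, hPD1]
    dsimp only
    rw [hPD2]
    dsimp only
    rw [show (2*a0)/2 = a0 by omega, show (2*b0+1-1)/2 = b0 by omega,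
        show (4*h)/4 = h by omega, decide_eq_true (show (3*a0+b0-2*h + (-a0+5*b0-2*h+2)) % 2 = 0 by omega), decide_eq_true (show (2*(a0+3*b0+6*h+1)+1 - (2*a0+6*b0-4*h+3)) % 4 = 0 by omega), decide_eq_true (show (2*a0+6*b0+3 - (2*a0-2*b0-1)) % 4 = 0 by omega)]

lemma F1_mem' (m : ℤ) (p : ℤ × ℤ × ℤ) (hm : m = tri p.1 + 3*tri p.2.1 + 3*tri p.2.2) :
    8*m+7 = 4*(F1 p).1.1^2 + 3*(2*(F1 p).1.2.1+1)^2 + 12*(F1 p).1.2.2^2 := by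
  obtain ⟨x, y, z⟩ := p; exact F1_mem m x y z hm

lemma G1_mem' (m : ℤ) (c : ℤ × ℤ × ℤ) (bit : Bool)
    (hc : 8*m+7 = 4*c.1^2 + 3*(2*c.2.1+1)^2 + 12*c.2.2^2) :
    m = tri (G1 (c,bit)).1 + 3*tri (G1 (c,bit)).2.1 + 3*tri (G1 (c,bit)).2.2 := by
  obtain ⟨a, b, h⟩ := c; exact G1_mem (8*m+7) m a b h rfl hc bit

lemma F1_G1' (m : ℤ) (c : ℤ × ℤ × ℤ) (bit : Bool)
    (hc : 8*m+7 = 4*c.1^2 + 3*(2*c.2.1+1)^2 + 12*c.2.2^2) :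
    F1 (G1 (c,bit)) = (c,bit) := by
  obtain ⟨a, b, h⟩ := c; exact F1_G1 (8*m+7) a b h (by omega) hc bit

lemma F2_spec' (m : ℤ) (p : ℤ × ℤ × ℤ) (hm : 32*m+27 = 2*tri p.1 + 3*tri p.2.1 + 3*tri p.2.2) :
    (8*m+7 = 4*(F2 p).1.1^2 + 3*(2*(F2 p).1.2.1+1)^2 + 12*(F2 p).1.2.2^2)
    ∧ G2 (F2 p) = p := by
  obtain ⟨x, y, z⟩ := p; exact F2_spec m x y z hm

lemma G2_mem' (m : ℤ) (c : ℤ × ℤ × ℤ) (bb : Bool × Bool × Bool)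
    (hc : 8*m+7 = 4*c.1^2 + 3*(2*c.2.1+1)^2 + 12*c.2.2^2) :
    32*m+27 = 2*tri (G2 (c,bb)).1 + 3*tri (G2 (c,bb)).2.1 + 3*tri (G2 (c,bb)).2.2 := by
  obtain ⟨a, b, h⟩ := c; exact G2_mem m a b h bb hc

lemma F2_G2' (c : ℤ × ℤ × ℤ) (bb : Bool × Bool × Bool) : F2 (G2 (c,bb)) = (c,bb) := by
  obtain ⟨a, b, h⟩ := c; exact F2_G2 a b h bb

theorem stmt3 (m : ℕ) : t 2 3 3 (32 * m + 27) = 4 * t 1 3 3 m := by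
  set CT := {q : ℤ × ℤ × ℤ // 8*(m:ℤ)+7 = 4*q.1^2 + 3*(2*q.2.1+1)^2 + 12*q.2.2^2} with hCT
  have e2 : {p : ℤ × ℤ × ℤ // ((32*m+27 : ℕ) : ℤ) = (2:ℕ) * tri p.1 + (3:ℕ) * tri p.2.1 + (3:ℕ) * tri p.2.2}
      ≃ CT × (Bool × Bool × Bool) :=
    { toFun := fun p => (⟨(F2 p.1).1, by
        have hm := p.2; push_cast at hm
        exact (F2_spec' (m:ℤ) p.1 (by linarith)).1⟩, (F2 p.1).2)
      invFun := fun c => ⟨G2 (c.1.1, c.2), by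
        have hc := c.1.2
        push_cast
        linarith [G2_mem' (m:ℤ) c.1.1 c.2 hc]⟩
      left_inv := fun p => Subtype.ext (by
        have hm := p.2; push_cast at hm
        exact (F2_spec' (m:ℤ) p.1 (by linarith)).2)
      right_inv := fun c => by
        obtain ⟨⟨c1, hc1⟩, bb⟩ := c
        have h := F2_G2' c1 bb
        have h1 : (F2 (G2 (c1, bb))).1 = c1 := by rw [h]
        have h2 : (F2 (G2 (c1, bb))).2 = bb := by rw [h]
        exact Prod.ext (Subtype.ext h1) h2 }
  have e1 : {p : ℤ × ℤ × ℤ // ((m : ℕ) : ℤ) = (1:ℕ) * tri p.1 + (3:ℕ) * tri p.2.1 + (3:ℕ) * tri p.2.2}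
      ≃ CT × Bool :=
    { toFun := fun p => (⟨(F1 p.1).1, by
        have hm := p.2; push_cast at hm
        exact F1_mem' (m:ℤ) p.1 (by linarith)⟩, (F1 p.1).2)
      invFun := fun c => ⟨G1 (c.1.1, c.2), by
        have hc := c.1.2
        push_cast
        linarith [G1_mem' (m:ℤ) c.1.1 c.2 hc]⟩
      left_inv := fun p => Subtype.ext (G1_F1 p.1)
      right_inv := fun c => by
        obtain ⟨⟨c1, hc1⟩, bit⟩ := c
        have h := F1_G1' (m:ℤ) c1 bit hc1
        have h1 : (F1 (G1 (c1, bit))).1 = c1 := by rw [h]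
        have h2 : (F1 (G1 (c1, bit))).2 = bit := by rw [h]
        exact Prod.ext (Subtype.ext h1) h2 }
  calc t 2 3 3 (32*m+27) = Nat.card (CT × (Bool × Bool × Bool)) := Nat.card_congr e2
    _ = Nat.card CT * 8 := by
        simp [Nat.card_prod, Nat.card_eq_fintype_card]
    _ = 4 * (Nat.card CT * 2) := by ring
    _ = 4 * Nat.card (CT × Bool) := by
        simp [Nat.card_prod, Nat.card_eq_fintype_card]
    _ = 4 * t 1 3 3 m := by
        rw [show t 1 3 3 m = Nat.card (CT × Bool) from Nat.card_congr e1]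
end

section
/- For every positive integer n with n ≡ 2 (mod 8), t(2,3,3;n) = 2·N(1,3,3;n+1), and for every positive integer n with n ≡ 6 (mod 8), t(2,3,3;n) = N(1,3,3;n+1). -/
/-!
Completing squares turns `n = 2T(x) + 3T(y) + 3T(z)` into `4(n + 1) = u² + 3p² + 3q²` with
`u = 2x + 1`, `p = y + z + 1`, `q = y - z`, i.e. `u` odd and `p + q` odd. Everything then reduces
to the binary form `x² + 3y²`, the norm form of the Eisenstein integers: for `m ≡ 4 (mod 8)`,
multiplication by the units `(1 ± √-3) / 2` shows that `m` has exactly twice as many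
representations with both coordinates odd as with both even. Writing `E(M)` for the number of
representations `M = x² + 3y² + 3z²` with `z` even, this gives `t(2,3,3; M - 1) = 4 E(M)` for odd
`M`, while for `M ≡ 3 (mod 4)` a parity count gives `N(1,3,3; M) = 2 E(M) + #{y, z odd}`; the last
term vanishes for `M ≡ 3 (mod 8)` and, by the binary identity again, equals `2 E(M)` for
`M ≡ 7 (mod 8)`.
-/

section Counting

variable {α : Type*}

noncomputable def prodBoolEquivOfInvolutive (σ : α → α) (hσ : Function.Involutive σ)
    {P Q : α → Prop} (hP : ∀ a, P a → P (σ a)) (hQ : ∀ a, P a → (Q (σ a) ↔ ¬Q a)) :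
    {a // P a ∧ Q a} × Bool ≃ {a // P a} :=
  Equiv.ofBijective (fun x => cond x.2 ⟨x.1, x.1.2.1⟩ ⟨σ x.1, hP _ x.1.2.1⟩) <| by
    constructor
    · rintro ⟨⟨a, ha, hQa⟩, _ | _⟩ ⟨⟨b, hb, hQb⟩, _ | _⟩ h <;>
        simp only [cond_false, cond_true, Subtype.mk.injEq] at h
      · simp [hσ.injective h]
      · exact ((hQ a ha).1 (h ▸ hQb) hQa).elim
      · exact ((hQ b hb).1 (h ▸ hQa) hQb).elim
      · simp [h]
    · rintro ⟨a, ha⟩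
      by_cases hQa : Q a
      · exact ⟨(⟨a, ha, hQa⟩, true), rfl⟩
      · exact ⟨(⟨σ a, hP a ha, (hσ a).symm ▸ (hQ a ha).2 hQa⟩, false), by simp [hσ a]⟩

theorem card_eq_two_mul_of_involutive (σ : α → α) (hσ : Function.Involutive σ)
    {P Q : α → Prop} (hP : ∀ a, P a → P (σ a)) (hQ : ∀ a, P a → (Q (σ a) ↔ ¬Q a)) :
    Nat.card {a // P a} = 2 * Nat.card {a // P a ∧ Q a} := by
  rw [← Nat.card_congr (prodBoolEquivOfInvolutive σ hσ hP hQ), Nat.card_prod,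
    Nat.card_eq_fintype_card (α := Bool), Fintype.card_bool, mul_comm]

theorem card_and_add_card_and_not {P : α → Prop} (Q : α → Prop) [Finite {a // P a}] :
    Nat.card {a // P a ∧ Q a} + Nat.card {a // P a ∧ ¬Q a} = Nat.card {a // P a} := by
  classical
  have e := ((Equiv.subtypeSubtypeEquivSubtypeInter P Q).symm.sumCongr
      (Equiv.subtypeSubtypeEquivSubtypeInter P (¬Q ·)).symm).trans
      (Equiv.sumCompl fun a : {a // P a} => Q a)
  have : Finite ({a // P a ∧ Q a} ⊕ {a // P a ∧ ¬Q a}) := .of_equiv _ e.symm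
  have := Finite.sum_left (α := {a // P a ∧ Q a}) {a // P a ∧ ¬Q a}
  have := Finite.sum_right (β := {a // P a ∧ ¬Q a}) {a // P a ∧ Q a}
  rw [← Nat.card_sum, Nat.card_congr e]

variable {β γ : Type*}

def subtypeProdEquivOfFiberwise {P Q : α → β → Prop}
    (e : ∀ a, {b // P a b} ≃ {b // Q a b} × γ) :
    {x : α × β // P x.1 x.2} ≃ {x : α × β // Q x.1 x.2} × γ :=
  (Equiv.subtypeProdEquivSigmaSubtype P).trans <| (Equiv.sigmaCongrRight e).trans <|
    (Equiv.sigmaProdDistrib _ _).symm.trans <|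
      (Equiv.subtypeProdEquivSigmaSubtype Q).symm.prodCongr (Equiv.refl γ)

end Counting

theorem sq_emod_eight_cases (a : ℤ) :
    (a % 2 = 1 ∧ a ^ 2 % 8 = 1) ∨ (a % 4 = 2 ∧ a ^ 2 % 8 = 4) ∨
      (a % 4 = 0 ∧ a ^ 2 % 8 = 0) := by
  have ha : a = 4 * (a / 4) + a % 4 := (Int.mul_ediv_add_emod a 4).symm
  have key : a ^ 2 = (a % 4) ^ 2 + 8 * (2 * (a / 4) ^ 2 + (a / 4) * (a % 4)) := by
    linear_combination (a + 4 * (a / 4) + a % 4) * ha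
  have hr : a % 4 = 0 ∨ a % 4 = 1 ∨ a % 4 = 2 ∨ a % 4 = 3 := by omega
  rcases hr with h | h | h | h <;> rw [h] at key <;> omega

-- `(x + 3y)² + 3(x - y)² = 4(x² + 3y²)`, and `x + y` is odd exactly when `x² + 3y²` is.
def oddReprCongrEquiv (m : ℤ) :
    {q : ℤ × ℤ //
      (q.1 ^ 2 + 3 * q.2 ^ 2 = m ∧ q.1 % 2 = 1 ∧ q.2 % 2 = 1) ∧ (q.1 - q.2) % 4 = 0} ≃
      {q : ℤ × ℤ // 4 * (q.1 ^ 2 + 3 * q.2 ^ 2) = m ∧ m % 8 = 4} where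
  toFun q := ⟨((q.1.1 + 3 * q.1.2) / 4, (q.1.1 - q.1.2) / 4), by
    obtain ⟨⟨u, p⟩, ⟨hm, hu, -⟩, hup⟩ := q
    dsimp only at hm hu hup ⊢
    generalize hx : (u + 3 * p) / 4 = x
    generalize hy : (u - p) / 4 = y
    obtain rfl : u = x + 3 * y := by omega
    obtain rfl : p = x - y := by omega
    have := sq_emod_eight_cases x; have := sq_emod_eight_cases y
    have h4 : 4 * (x ^ 2 + 3 * y ^ 2) = m := by linear_combination hm
    exact ⟨h4, by omega⟩⟩
  invFun q := ⟨(q.1.1 + 3 * q.1.2, q.1.1 - q.1.2), by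
    obtain ⟨⟨x, y⟩, hm, h8⟩ := q
    dsimp only at hm ⊢
    have := sq_emod_eight_cases x; have := sq_emod_eight_cases y
    exact ⟨⟨by linear_combination hm, by omega, by omega⟩, by omega⟩⟩
  left_inv q := by
    obtain ⟨⟨u, p⟩, _, hup⟩ := q
    dsimp only at hup
    ext <;> dsimp only <;> omega
  right_inv q := by ext <;> dsimp only <;> omega

-- Odd `u, p` have `u ≡ p` or `u ≡ -p (mod 4)`; `(u, p) ↦ (u, -p)` swaps the two classes.
noncomputable def oddReprEquiv (m : ℤ) :
    {q : ℤ × ℤ // q.1 ^ 2 + 3 * q.2 ^ 2 = m ∧ q.1 % 2 = 1 ∧ q.2 % 2 = 1} ≃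
      {q : ℤ × ℤ // 4 * (q.1 ^ 2 + 3 * q.2 ^ 2) = m ∧ m % 8 = 4} × Bool :=
  (prodBoolEquivOfInvolutive (fun q : ℤ × ℤ => (q.1, -q.2)) (fun q => by simp)
      (fun q ⟨hm, hu, hp⟩ => ⟨by simpa using hm, hu, by simp only; omega⟩)
      (fun q ⟨_, hu, hp⟩ => by simp only; omega)).symm.trans
    ((oddReprCongrEquiv m).prodCongr (Equiv.refl Bool))

theorem finite_reprs (M : ℤ) :
    {p : ℤ × ℤ × ℤ | M = p.1 ^ 2 + 3 * p.2.1 ^ 2 + 3 * p.2.2 ^ 2}.Finite := by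
  have hI : ∀ b : ℤ, b ^ 2 ≤ M → b ∈ Set.Icc (-M) M := fun b hb => by
    have h₁ := Int.le_self_sq b
    have h₂ := Int.le_self_sq (-b)
    rw [neg_sq] at h₂
    constructor <;> linarith
  have hIcc := Set.finite_Icc (-M) M
  refine (hIcc.prod (hIcc.prod hIcc)).subset
    fun p (hp : M = _) => ⟨hI _ ?_, hI _ ?_, hI _ ?_⟩ <;>
    linarith [sq_nonneg p.1, sq_nonneg p.2.1, sq_nonneg p.2.2]

theorem two_mul_tri (x : ℤ) : 2 * tri x = x * (x + 1) := by
  obtain ⟨k, hk⟩ := Int.even_mul_succ_self x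
  unfold tri; omega

theorem t_two_three_three_eq_card (n : ℕ) :
    t 2 3 3 n = Nat.card {p : ℤ × ℤ × ℤ //
      p.1 ^ 2 + 3 * p.2.1 ^ 2 + 3 * p.2.2 ^ 2 = 4 * (n + 1) ∧
        p.1 % 2 = 1 ∧ (p.2.1 + p.2.2) % 2 = 1} :=
  Nat.card_congr {
    toFun := fun p => ⟨(2 * p.1.1 + 1, p.1.2.1 + p.1.2.2 + 1, p.1.2.1 - p.1.2.2), by
      obtain ⟨⟨x, y, z⟩, h⟩ := p
      simp only [Nat.cast_ofNat] at h ⊢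
      refine ⟨?_, by omega, by omega⟩
      linear_combination -4 * h - 4 * two_mul_tri x - 6 * two_mul_tri y - 6 * two_mul_tri z⟩
    invFun := fun p =>
      ⟨((p.1.1 - 1) / 2, (p.1.2.1 + p.1.2.2 - 1) / 2, (p.1.2.1 - p.1.2.2 - 1) / 2), by
      obtain ⟨⟨u, p, q⟩, h, hu, hpq⟩ := p
      dsimp only at h hu hpq
      simp only [Nat.cast_ofNat]
      generalize hx : (u - 1) / 2 = x
      generalize hy : (p + q - 1) / 2 = y
      generalize hz : (p - q - 1) / 2 = z
      obtain rfl : u = 2 * x + 1 := by omega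
      obtain rfl : p = y + z + 1 := by omega
      obtain rfl : q = y - z := by omega
      have h8 : 8 * (n : ℤ) = 8 * (2 * tri x + 3 * tri y + 3 * tri z) := by
        linear_combination
          -2 * h - 8 * two_mul_tri x - 12 * two_mul_tri y - 12 * two_mul_tri z
      omega⟩
    left_inv := fun p => by ext <;> dsimp only <;> omega
    right_inv := fun p => by
      obtain ⟨⟨u, p, q⟩, -, hu, hpq⟩ := p
      dsimp only at hu hpq
      ext <;> dsimp only <;> omega }

def evenLastReprs (M : ℤ) : Set (ℤ × ℤ × ℤ) :=
  {p | M = p.1 ^ 2 + 3 * p.2.1 ^ 2 + 3 * p.2.2 ^ 2 ∧ p.2.2 % 2 = 0}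

theorem card_oddReprs_four_mul_eq_two_mul (M : ℤ) :
    Nat.card {p : ℤ × ℤ × ℤ // p.1 ^ 2 + 3 * p.2.1 ^ 2 + 3 * p.2.2 ^ 2 = 4 * M ∧
      p.1 % 2 = 1 ∧ (p.2.1 + p.2.2) % 2 = 1} =
      2 * Nat.card {x : ℤ × ℤ × ℤ //
        x.2.1 ^ 2 + 3 * x.2.2 ^ 2 = 4 * M - 12 * x.1 ^ 2 ∧ x.2.1 % 2 = 1 ∧ x.2.2 % 2 = 1} := by
  rw [card_eq_two_mul_of_involutive
    (fun p : ℤ × ℤ × ℤ => (p.1, p.2.2, p.2.1)) (fun _ => rfl)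
    (fun p ⟨h, hu, hpq⟩ => ⟨by linear_combination h, hu, by simp only; omega⟩)
    (Q := fun p => p.2.2 % 2 = 0) (fun p ⟨_, _, hpq⟩ => by simp only; omega)]
  congr 1
  exact Nat.card_congr {
    toFun := fun p => ⟨(p.1.2.2 / 2, p.1.1, p.1.2.1), by
      obtain ⟨⟨u, p, q⟩, ⟨h, hu, hpq⟩, hq⟩ := p
      dsimp only at h hu hpq hq ⊢
      obtain ⟨c, rfl⟩ : ∃ c, q = 2 * c := ⟨q / 2, by omega⟩
      rw [Int.mul_ediv_cancel_left _ two_ne_zero]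
      exact ⟨by linear_combination h, hu, by omega⟩⟩
    invFun := fun x => ⟨(x.1.2.1, x.1.2.2, 2 * x.1.1), by
      obtain ⟨⟨c, u, p⟩, h, hu, hp⟩ := x
      dsimp only at h hu hp ⊢
      exact ⟨⟨by linear_combination h, hu, by omega⟩, by omega⟩⟩
    left_inv := fun p => by
      obtain ⟨⟨u, p, q⟩, -, hq⟩ := p
      dsimp only at hq
      ext <;> dsimp only
      omega
    right_inv := fun x => by
      ext <;> dsimp only
      omega }

theorem card_oddReprs_four_mul_eq_four_mul (M : ℤ) (hM : M % 2 = 1) :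
    Nat.card {p : ℤ × ℤ × ℤ // p.1 ^ 2 + 3 * p.2.1 ^ 2 + 3 * p.2.2 ^ 2 = 4 * M ∧
      p.1 % 2 = 1 ∧ (p.2.1 + p.2.2) % 2 = 1} =
      4 * Nat.card (evenLastReprs M) := by
  rw [card_oddReprs_four_mul_eq_two_mul, Nat.card_congr (subtypeProdEquivOfFiberwise
    fun c => oddReprEquiv (4 * M - 12 * c ^ 2)), Nat.card_prod,
    Nat.card_eq_fintype_card (α := Bool), Fintype.card_bool]
  have e : {x : ℤ × ℤ × ℤ // 4 * (x.2.1 ^ 2 + 3 * x.2.2 ^ 2) = 4 * M - 12 * x.1 ^ 2 ∧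
      (4 * M - 12 * x.1 ^ 2) % 8 = 4} ≃ evenLastReprs M :=
    Equiv.subtypeEquiv (⟨fun x => (x.2.1, x.2.2, x.1), fun p => (p.2.2, p.1, p.2.1),
      fun _ => rfl, fun _ => rfl⟩ : ℤ × ℤ × ℤ ≃ ℤ × ℤ × ℤ)
      fun ⟨c, x, y⟩ => by
        have := sq_emod_eight_cases c
        simp only [evenLastReprs, Equiv.coe_fn_mk, Set.mem_ofPred_eq]
        omega
  rw [Nat.card_congr e]
  ring

theorem card_reprs_eq_two_mul_add (M : ℤ) (hM : M % 4 = 3) :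
    Nat.card {p : ℤ × ℤ × ℤ // M = p.1 ^ 2 + 3 * p.2.1 ^ 2 + 3 * p.2.2 ^ 2} =
      2 * Nat.card (evenLastReprs M) +
      Nat.card {p : ℤ × ℤ × ℤ //
        M = p.1 ^ 2 + 3 * p.2.1 ^ 2 + 3 * p.2.2 ^ 2 ∧ p.2.1 % 2 = 1 ∧ p.2.2 % 2 = 1} := by
  have : Finite {p : ℤ × ℤ × ℤ // M = p.1 ^ 2 + 3 * p.2.1 ^ 2 + 3 * p.2.2 ^ 2} :=
    (finite_reprs M).to_subtype
  have hyz (p : ℤ × ℤ × ℤ) (h : M = p.1 ^ 2 + 3 * p.2.1 ^ 2 + 3 * p.2.2 ^ 2) :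
      p.2.1 % 2 = 1 ∨ p.2.2 % 2 = 1 := by
    have := sq_emod_eight_cases p.1; have := sq_emod_eight_cases p.2.1
    have := sq_emod_eight_cases p.2.2
    omega
  rw [← card_and_add_card_and_not fun p : ℤ × ℤ × ℤ => (p.2.1 + p.2.2) % 2 = 1,
    card_eq_two_mul_of_involutive (fun p : ℤ × ℤ × ℤ => (p.1, p.2.2, p.2.1)) (fun _ => rfl)
      (fun p ⟨h, hs⟩ => ⟨by linear_combination h, by simp only; omega⟩)
      (Q := fun p => p.2.2 % 2 = 0) (fun p ⟨_, hs⟩ => by simp only; omega)]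
  congr 1
  · congr 1
    exact Nat.card_congr (Equiv.subtypeEquivRight fun p => by
      have := hyz p
      simp only [evenLastReprs, Set.mem_ofPred_eq]
      omega)
  · exact Nat.card_congr (Equiv.subtypeEquivRight fun p => by have := hyz p; omega)

theorem card_reprs_odd_odd_eq_zero (M : ℤ) (hM : M % 8 = 3) :
    Nat.card {p : ℤ × ℤ × ℤ //
      M = p.1 ^ 2 + 3 * p.2.1 ^ 2 + 3 * p.2.2 ^ 2 ∧ p.2.1 % 2 = 1 ∧ p.2.2 % 2 = 1} = 0 := by
  refine Nat.card_eq_zero.2 (.inl ⟨fun ⟨⟨x, y, z⟩, h, hy, hz⟩ => ?_⟩)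
  dsimp only at h hy hz
  have := sq_emod_eight_cases x; have := sq_emod_eight_cases y; have := sq_emod_eight_cases z
  omega

theorem card_reprs_odd_odd_eq_two_mul (M : ℤ) (hM : M % 8 = 7) :
    Nat.card {p : ℤ × ℤ × ℤ //
      M = p.1 ^ 2 + 3 * p.2.1 ^ 2 + 3 * p.2.2 ^ 2 ∧ p.2.1 % 2 = 1 ∧ p.2.2 % 2 = 1} =
      2 * Nat.card (evenLastReprs M) := by
  have e₁ : {p : ℤ × ℤ × ℤ //
      M = p.1 ^ 2 + 3 * p.2.1 ^ 2 + 3 * p.2.2 ^ 2 ∧ p.2.1 % 2 = 1 ∧ p.2.2 % 2 = 1} ≃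
      {x : ℤ × ℤ × ℤ //
        x.2.1 ^ 2 + 3 * x.2.2 ^ 2 = M - 3 * x.1 ^ 2 ∧ x.2.1 % 2 = 1 ∧ x.2.2 % 2 = 1} :=
    Equiv.subtypeEquiv (⟨fun p => (p.2.1, p.1, p.2.2), fun x => (x.2.1, x.1, x.2.2),
      fun _ => rfl, fun _ => rfl⟩ : ℤ × ℤ × ℤ ≃ ℤ × ℤ × ℤ)
      fun ⟨x, y, z⟩ => by
        have := sq_emod_eight_cases x; have := sq_emod_eight_cases y
        have := sq_emod_eight_cases z
        simp only [Equiv.coe_fn_mk]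
        omega
  have e₂ : {x : ℤ × ℤ × ℤ // 4 * (x.2.1 ^ 2 + 3 * x.2.2 ^ 2) = M - 3 * x.1 ^ 2 ∧
      (M - 3 * x.1 ^ 2) % 8 = 4} ≃ evenLastReprs M := {
    toFun := fun x => ⟨(2 * x.1.2.1, x.1.1, 2 * x.1.2.2), by
      obtain ⟨⟨y, x, z⟩, h, -⟩ := x
      exact ⟨by linear_combination -h, by simp only; omega⟩⟩
    invFun := fun p => ⟨(p.1.2.1, p.1.1 / 2, p.1.2.2 / 2), by
      obtain ⟨⟨x, y, z⟩, h, hz⟩ := p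
      dsimp only at h hz ⊢
      have := sq_emod_eight_cases x; have := sq_emod_eight_cases y
      have := sq_emod_eight_cases z
      obtain ⟨a, rfl⟩ : ∃ a, x = 2 * a := ⟨x / 2, by omega⟩
      obtain ⟨c, rfl⟩ : ∃ c, z = 2 * c := ⟨z / 2, by omega⟩
      simp only [Int.mul_ediv_cancel_left _ two_ne_zero]
      exact ⟨by linear_combination -h, by omega⟩⟩
    left_inv := fun x => by ext <;> dsimp only <;> omega
    right_inv := fun p => by
      obtain ⟨⟨x, y, z⟩, h, hz⟩ := p
      dsimp only at h hz
      have := sq_emod_eight_cases x; have := sq_emod_eight_cases y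
      have := sq_emod_eight_cases z
      ext <;> dsimp only <;> omega }
  rw [Nat.card_congr (e₁.trans (subtypeProdEquivOfFiberwise
    fun y => oddReprEquiv (M - 3 * y ^ 2))), Nat.card_prod, Nat.card_congr e₂,
    Nat.card_eq_fintype_card (α := Bool), Fintype.card_bool, mul_comm]

theorem stmt5_general (n : ℕ) :
    (n % 8 = 2 → t 2 3 3 n = 2 * N 1 3 3 (n + 1)) ∧
    (n % 8 = 6 → t 2 3 3 n = N 1 3 3 (n + 1)) := by
  have hN : N 1 3 3 (n + 1) = Nat.card {p : ℤ × ℤ × ℤ //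
      (n : ℤ) + 1 = p.1 ^ 2 + 3 * p.2.1 ^ 2 + 3 * p.2.2 ^ 2} := by
    simp only [N, Nat.cast_add, Nat.cast_one, one_mul, Nat.cast_ofNat]
  rw [hN, t_two_three_three_eq_card]
  refine ⟨fun h8 => ?_, fun h8 => ?_⟩
  · rw [card_oddReprs_four_mul_eq_four_mul _ (by omega),
      card_reprs_eq_two_mul_add _ (by omega), card_reprs_odd_odd_eq_zero _ (by omega)]
    ring
  · rw [card_oddReprs_four_mul_eq_four_mul _ (by omega),
      card_reprs_eq_two_mul_add _ (by omega), card_reprs_odd_odd_eq_two_mul _ (by omega)]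
    ring

theorem stmt5 (n : ℕ) (hn : 0 < n) :
    (n % 8 = 2 → t 2 3 3 n = 2 * N 1 3 3 (n + 1)) ∧
    (n % 8 = 6 → t 2 3 3 n = N 1 3 3 (n + 1)) :=
  stmt5_general n
end

section
/- For every positive integer n, N(1,1,6;2n) = N(1,1,3;n), i.e. the number of integer solutions of x²+y²+6z² = 2n equals the number of integer solutions of x²+y²+3z² = n. -/
lemma parity_aux {n : ℕ} {x y z : ℤ}
    (h : ((2 * n : ℕ) : ℤ) = 1 * x ^ 2 + 1 * y ^ 2 + 6 * z ^ 2) : Even (x + y) := by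
  have h1 : Even (x ^ 2 + y ^ 2) := ⟨(n : ℤ) - 3 * z ^ 2, by push_cast at h; linarith⟩
  rw [Int.even_add] at h1 ⊢
  simpa [Int.even_pow] using h1

theorem stmt8 (n : ℕ) (hn : 0 < n) : N 1 1 6 (2 * n) = N 1 1 3 n := by
  unfold N
  apply Nat.card_congr
  refine ⟨fun p => ⟨⟨(p.1.1 + p.1.2.1) / 2, (p.1.1 - p.1.2.1) / 2, p.1.2.2⟩, ?_⟩,
    fun q => ⟨⟨q.1.1 + q.1.2.1, q.1.1 - q.1.2.1, q.1.2.2⟩, ?_⟩, ?_, ?_⟩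
  · obtain ⟨⟨x, y, z⟩, h⟩ := p
    obtain ⟨k, hk⟩ := parity_aux h
    simp only at hk
    push_cast at h ⊢
    have e1 : (x + y) / 2 = k := by omega
    have e2 : (x - y) / 2 = x - k := by omega
    rw [e1, e2]
    have h2 : 2 * (n : ℤ) = 2 * (1 * k ^ 2 + 1 * (x - k) ^ 2 + 3 * z ^ 2) := by
      linear_combination h + (y + 2 * k - x) * hk
    linarith
  · obtain ⟨⟨u, v, z⟩, h⟩ := q
    push_cast at h ⊢
    ring_nf
    ring_nf at h
    nlinarith [h]
  · rintro ⟨⟨x, y, z⟩, h⟩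
    obtain ⟨k, hk⟩ := parity_aux h
    simp only at hk
    apply Subtype.ext
    simp only [Prod.mk.injEq]
    refine ⟨?_, ?_, trivial⟩ <;> omega
  · rintro ⟨⟨u, v, z⟩, h⟩
    apply Subtype.ext
    simp only [Prod.mk.injEq]
    refine ⟨?_, ?_, trivial⟩ <;> omega
end
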